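/- arXiv:1312.6662 — 9 statements merged into one kernel-verified Lean document; each statement's English description precedes it below -/
import Mathlib

section
/- Let (V,ρ) be a real finite-dimensional representation of a finite group G, and let V = W₁ ⊕ ⋯ ⊕ W_h be a decomposition into irreducible invariant subspaces sorted so that dim W₁ ≤ dim W₂ ≤ ⋯ ≤ dim W_h. If W is any G-invariant subspace of V with dim W < dim W_{i₀} for some index i₀, then W ⊆ W₁ ⊕ ⋯ ⊕ W_{i₀-1}. -/
/-- If a finite-dimensional real representation decomposes as an internal direct sum of
irreducible invariant subspaces `W 0, …, W (h-1)` sorted in nondecreasing order of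
dimension, then any invariant subspace `W'` of dimension less than `dim (W i₀)` is
contained in `W 0 ⊕ ⋯ ⊕ W (i₀ - 1)`. -/
theorem invariant_subspace_le_sum_of_small_dim
    {G V : Type*} [Group G] [Fintype G] [AddCommGroup V] [Module ℝ V]
    [FiniteDimensional ℝ V]
    (ρ : Representation ℝ G V) (h : ℕ) (W : Fin h → Submodule ℝ V)
    (hinv : ∀ i (g : G) v, v ∈ W i → ρ g v ∈ W i)
    (hirr : ∀ i, W i ≠ ⊥ ∧
      ∀ U : Submodule ℝ V, U ≤ W i → (∀ (g : G) v, v ∈ U → ρ g v ∈ U) →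
        U = ⊥ ∨ U = W i)
    (hsum : DirectSum.IsInternal W)
    (hsort : Monotone fun i => Module.finrank ℝ (W i))
    (i₀ : Fin h) (W' : Submodule ℝ V)
    (hW'inv : ∀ (g : G) v, v ∈ W' → ρ g v ∈ W')
    (hdim : Module.finrank ℝ W' < Module.finrank ℝ (W i₀)) :
    W' ≤ ⨆ i < i₀, W i := by
  classical
  set e := LinearEquiv.ofBijective (DirectSum.coeLinearMap W) hsum with he
  -- projections
  set π : Fin h → V →ₗ[ℝ] V := fun i =>
    (W i).subtype ∘ₗ (DirectSum.component ℝ (Fin h) (fun i => W i) i) ∘ₗ e.symm.toLinearMap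
    with hπ
  have hπ_mem : ∀ i v, π i v ∈ W i := fun i v => (e.symm v i).2
  have hπ_same : ∀ i (v : V), v ∈ W i → π i v = v := by
    intro i v hv
    simp only [hπ, LinearMap.coe_comp, Function.comp_apply, LinearEquiv.coe_coe,
      Submodule.coe_subtype]
    rw [show (DirectSum.component ℝ (Fin h) (fun i => W i) i) (e.symm v) = e.symm v i from rfl,
      hsum.ofBijective_coeLinearMap_of_mem hv]
  have hπ_ne : ∀ i j (v : V), i ≠ j → v ∈ W i → π j v = 0 := by
    intro i j v hij hv
    simp only [hπ, LinearMap.coe_comp, Function.comp_apply, LinearEquiv.coe_coe,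
      Submodule.coe_subtype]
    rw [show (DirectSum.component ℝ (Fin h) (fun i => W i) j) (e.symm v) = e.symm v j from rfl,
      hsum.ofBijective_coeLinearMap_of_mem_ne hij hv]
    rfl
  have hπ_sum : ∀ v : V, ∑ i, π i v = v := by
    intro v
    have h1 : ∑ i, DirectSum.of (fun i => W i) i (e.symm v i) = e.symm v :=
      DirectSum.sum_univ_of _
    calc ∑ i, π i v = DirectSum.coeLinearMap W
          (∑ i, DirectSum.of (fun i => W i) i (e.symm v i)) := by
            rw [map_sum]
            refine Finset.sum_congr rfl fun i _ => ?_
            rw [DirectSum.coeLinearMap_of]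
            rfl
      _ = v := by rw [h1]; exact e.apply_symm_apply v
  -- equivariance of projections
  have hπ_equiv : ∀ i (g : G) (v : V), π i (ρ g v) = ρ g (π i v) := by
    intro i g v
    conv_lhs => rw [← hπ_sum v]
    rw [map_sum, map_sum]
    rw [Finset.sum_eq_single i]
    · exact hπ_same i _ (hinv i g _ (hπ_mem i v))
    · intro j _ hji
      exact hπ_ne j i _ hji (hinv j g _ (hπ_mem j v))
    · simp
  -- projections of W' to W i for i ≥ i₀ are zero
  have hzero : ∀ i, i₀ ≤ i → ∀ v ∈ W', π i v = 0 := by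
    intro i hi v hv
    set U := Submodule.map (π i) W' with hU
    have hUle : U ≤ W i := by
      rintro _ ⟨w, _, rfl⟩; exact hπ_mem i w
    have hUinv : ∀ (g : G) u, u ∈ U → ρ g u ∈ U := by
      rintro g _ ⟨w, hw, rfl⟩
      exact ⟨ρ g w, hW'inv g w hw, hπ_equiv i g w⟩
    rcases (hirr i).2 U hUle hUinv with hbot | htop
    · have : π i v ∈ U := ⟨v, hv, rfl⟩
      rwa [hbot, Submodule.mem_bot] at this
    · exfalso
      have h1 : Module.finrank ℝ (W i) ≤ Module.finrank ℝ W' := by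
        rw [← htop, hU]; exact Submodule.finrank_map_le _ _
      have h2 : Module.finrank ℝ (W i₀) ≤ Module.finrank ℝ (W i) := hsort hi
      omega
  -- conclude
  intro v hv
  rw [← hπ_sum v]
  refine Submodule.sum_mem _ fun i _ => ?_
  by_cases hi : i < i₀
  · exact Submodule.mem_iSup_of_mem i (Submodule.mem_iSup_of_mem hi (hπ_mem i v))
  · rw [hzero i (not_lt.mp hi) v hv]; exact Submodule.zero_mem _
end

section
/- The square [-1,1]² equals the projection onto the coordinates (X₁₂, X₁₃) of the set of 3×3 positive semidefinite matrices with all diagonal entries equal to 1 (the elliptope). That is, (x₁,x₂) ∈ [-1,1]² if and only if there exists u ∈ ℝ such that the matrix [[1,x₁,x₂],[x₁,1,u],[x₂,u,1]] is positive semidefinite. -/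
open Matrix

theorem Matrix.PosSemidef.two_mul_abs_apply_le {n : Type*} [Fintype n] [DecidableEq n]
    {A : Matrix n n ℝ} (hA : A.PosSemidef) (i j : n) : 2 * |A i j| ≤ A i i + A j j := by
  have hsymm : A j i = A i j := hA.isHermitian.apply i j
  have hform (s : ℝ) : 0 ≤ A i i + 2 * s * A i j + s ^ 2 * A j j := by
    have := hA.dotProduct_mulVec_nonneg (Pi.single i 1 + Pi.single j s)
    simp only [star_trivial, mulVec_add, mulVec_single, MulOpposite.op_one, one_smul,
      op_smul_eq_smul, dotProduct_add, add_dotProduct, single_dotProduct, col_apply, one_mul,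
      hsymm, dotProduct_smul, smul_eq_mul] at this
    linarith
  rw [← abs_two, ← abs_mul, abs_le]
  constructor <;> nlinarith [hform 1, hform (-1)]

/-- The completion `u = a * b` is the Gram matrix of `(1, 0, 0)`, `(a, √(1 - a²), 0)` and
`(b, 0, √(1 - b²))`, i.e. a rank-one term plus a nonnegative diagonal. -/
theorem posSemidef_of_abs_le_one {a b : ℝ} (ha : |a| ≤ 1) (hb : |b| ≤ 1) :
    !![1, a, b; a, 1, a * b; b, a * b, 1].PosSemidef := by
  have hdecomp : !![1, a, b; a, 1, a * b; b, a * b, 1] =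
      vecMulVec ![1, a, b] ![1, a, b] + diagonal ![0, 1 - a ^ 2, 1 - b ^ 2] := by
    ext i j
    fin_cases i <;> fin_cases j <;> simp [vecMulVec] <;> ring
  rw [hdecomp]
  refine (posSemidef_vecMulVec_self_star _).add (PosSemidef.diagonal fun i ↦ ?_)
  fin_cases i <;> simp [sq_le_one_iff_abs_le_one, ha, hb]

/-- The square `[-1,1]²` is the projection of the elliptope: `(x₁, x₂) ∈ [-1,1]²` iff
there is `u ∈ ℝ` such that `[[1,x₁,x₂],[x₁,1,u],[x₂,u,1]]` is positive semidefinite. -/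
theorem square_eq_proj_elliptope (x₁ x₂ : ℝ) :
    (x₁ ∈ Set.Icc (-1 : ℝ) 1 ∧ x₂ ∈ Set.Icc (-1 : ℝ) 1) ↔
      ∃ u : ℝ, (!![1, x₁, x₂; x₁, 1, u; x₂, u, 1]).PosSemidef := by
  constructor
  · rintro ⟨h₁, h₂⟩
    exact ⟨x₁ * x₂, posSemidef_of_abs_le_one (abs_le.2 h₁) (abs_le.2 h₂)⟩
  · rintro ⟨u, hM⟩
    have h₁ : 2 * |x₁| ≤ 1 + 1 := hM.two_mul_abs_apply_le 0 1
    have h₂ : 2 * |x₂| ≤ 1 + 1 := hM.two_mul_abs_apply_le 0 2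
    exact ⟨abs_le.1 (by linarith), abs_le.1 (by linarith)⟩
end

section
/- For n odd, the family of functions e_I : EVEN_n → ℝ, e_I(x) = ∏_{i∈I} x_i, indexed by subsets I ⊆ [n] with |I| < n/2, forms a basis of the vector space of all real-valued functions on EVEN_n. In particular these functions are linearly independent and span the full function space of dimension 2^{n-1}. -/
/-!
Since `∏ᵢ xᵢ = 1` and `xᵢ² = 1` on `EVEN_n`, the monomials satisfy `e_{Iᶜ} = e_I` there. For `n`
odd exactly one of `I`, `Iᶜ` has fewer than `n/2` elements, so the small monomials span the same
space as all monomials, which contains every point indicator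
`δ_x(y) = 2⁻ⁿ ∏ᵢ (1 + xᵢ yᵢ) = 2⁻ⁿ ∑_I e_I(x) e_I(y)`. Complementation also shows that there are
`2ⁿ⁻¹` small sets and `2ⁿ⁻¹` points of `EVEN_n`, so the spanning family is a basis.
-/

/-- The set `EVEN_n` of `±1` vectors with an even number of `-1`'s. -/
def EvenPt (n : ℕ) : Type :=
  {x : Fin n → ℝ // (∀ i, x i = 1 ∨ x i = -1) ∧ ∏ i, x i = 1}

/-- The monomial function `e_I(x) = ∏_{i ∈ I} x_i` on `EVEN_n`. -/
def evenMonomial (n : ℕ) (I : Finset (Fin n)) : EvenPt n → ℝ :=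
  fun x => ∏ i ∈ I, x.1 i

open Finset Submodule

theorem Fintype.two_mul_card_subtype_of_equiv_swap {α : Type*} [Fintype α] (p : α → Prop)
    [DecidablePred p] (e : α ≃ α) (he : ∀ a, p (e a) ↔ ¬ p a) :
    2 * Fintype.card {a // p a} = Fintype.card α := by
  have hswap : Fintype.card {a // p a} = Fintype.card {a // ¬ p a} :=
    Fintype.card_congr (e.subtypeEquiv fun a => by rw [he, not_not])
  have hle := Fintype.card_subtype_le p
  rw [Fintype.card_subtype_compl] at hswap
  omega

namespace EvenPt

variable {n : ℕ}

def signVector (S : Finset (Fin n)) : Fin n → ℝ := fun i => if i ∈ S then -1 else 1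

theorem prod_signVector (S : Finset (Fin n)) : ∏ i, signVector S i = (-1) ^ S.card := by
  simp [signVector, prod_ite_mem]

theorem signVector_injective : Function.Injective (signVector (n := n)) := by
  intro S T h
  ext i
  have hi := congrFun h i
  by_cases hS : i ∈ S <;> by_cases hT : i ∈ T <;> simp [signVector, hS, hT] at hi ⊢ <;> norm_num at hi

theorem eq_signVector (x : EvenPt n) : x.1 = signVector {i | x.1 i = -1} := by
  funext i
  rcases x.2.1 i with h | h <;> simp [signVector, h]

noncomputable def equivEvenCard (n : ℕ) : {S : Finset (Fin n) // Even S.card} ≃ EvenPt n :=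
  Equiv.ofBijective
    (fun S => ⟨signVector S.1, fun i => by unfold signVector; split_ifs <;> simp,
      by rw [prod_signVector]; exact S.2.neg_one_pow⟩)
    ⟨fun S T h => Subtype.ext (signVector_injective (congrArg Subtype.val h)), fun x => by
      have hprod := x.2.2
      rw [eq_signVector x, prod_signVector] at hprod
      exact ⟨⟨_, (neg_one_pow_eq_one_iff_even (by norm_num)).1 hprod⟩,
        Subtype.ext (eq_signVector x).symm⟩⟩

noncomputable instance : Fintype (EvenPt n) := Fintype.ofEquiv _ (equivEvenCard n)

theorem two_mul_card (hn : Odd n) : 2 * Fintype.card (EvenPt n) = 2 ^ n := by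
  rw [← Fintype.card_congr (equivEvenCard n),
    Fintype.two_mul_card_subtype_of_equiv_swap _ (compl_involutive.toPerm _) fun S => ?_]
  · simp
  have hle : S.card ≤ n := by simpa using card_le_univ S
  simp only [Function.Involutive.coe_toPerm, card_compl, Fintype.card_fin, Nat.even_sub hle]
  have := Nat.not_even_iff_odd.2 hn
  tauto

theorem mul_self_apply (x : EvenPt n) (i : Fin n) : x.1 i * x.1 i = 1 := by
  rcases x.2.1 i with h | h <;> rw [h] <;> norm_num

end EvenPt

theorem two_mul_card_small_finsets {n : ℕ} (hn : Odd n) :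
    2 * Fintype.card {I : Finset (Fin n) // 2 * I.card < n} = 2 ^ n := by
  rw [Fintype.two_mul_card_subtype_of_equiv_swap _ (compl_involutive.toPerm _) fun I => ?_]
  · simp
  have hle : I.card ≤ n := by simpa using card_le_univ I
  simp only [Function.Involutive.coe_toPerm, card_compl, Fintype.card_fin]
  obtain ⟨k, rfl⟩ := hn
  omega

section Monomials

variable {n : ℕ}

theorem evenMonomial_compl (I : Finset (Fin n)) : evenMonomial n Iᶜ = evenMonomial n I := by
  funext x
  have hcompl : evenMonomial n I x * evenMonomial n Iᶜ x = 1 := by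
    rw [evenMonomial, evenMonomial, prod_mul_prod_compl]
    exact x.2.2
  have hsq : evenMonomial n I x * evenMonomial n I x = 1 := by
    rw [evenMonomial, ← prod_mul_distrib]
    exact prod_eq_one fun i _ => x.mul_self_apply i
  exact mul_left_cancel₀ (left_ne_zero_of_mul_eq_one hsq) (hcompl.trans hsq.symm)

theorem sum_evenMonomial_mul_evenMonomial [DecidableEq (EvenPt n)] (x y : EvenPt n) :
    ∑ I, evenMonomial n I x * evenMonomial n I y = if x = y then 2 ^ n else 0 := by
  calc ∑ I, evenMonomial n I x * evenMonomial n I y = ∏ i, (1 + x.1 i * y.1 i) := by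
        simp [prod_one_add, evenMonomial, prod_mul_distrib]
    _ = if x = y then 2 ^ n else 0 := by
        split_ifs with hxy
        · subst hxy
          simp [x.mul_self_apply, one_add_one_eq_two]
        · obtain ⟨i, hi⟩ : ∃ i, x.1 i ≠ y.1 i := by
            by_contra! h
            exact hxy (Subtype.ext (funext h))
          refine prod_eq_zero (mem_univ i) ?_
          rcases x.2.1 i with hx | hx <;> rcases y.2.1 i with hy | hy <;> simp_all

theorem single_mem_span_range_evenMonomial [DecidableEq (EvenPt n)] (x : EvenPt n) :
    Pi.single x 1 ∈ span ℝ (Set.range (evenMonomial n)) := by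
  have hrepr : Pi.single x 1 = ((2 : ℝ) ^ n)⁻¹ • ∑ I, evenMonomial n I x • evenMonomial n I := by
    funext y
    simp only [Pi.smul_apply, Finset.sum_apply, smul_eq_mul, sum_evenMonomial_mul_evenMonomial]
    by_cases hxy : x = y
    · subst hxy
      simp
    · simp [hxy, Ne.symm hxy]
  rw [hrepr]
  exact smul_mem _ _ (sum_mem fun I _ => smul_mem _ _ (subset_span ⟨I, rfl⟩))

theorem span_range_evenMonomial : span ℝ (Set.range (evenMonomial n)) = ⊤ := by
  classical
  rw [eq_top_iff, ← (Pi.basisFun ℝ (EvenPt n)).span_eq, span_le]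
  rintro _ ⟨x, rfl⟩
  rw [Pi.basisFun_apply]
  exact single_mem_span_range_evenMonomial x

theorem span_range_small_evenMonomial (hn : Odd n) :
    span ℝ (Set.range fun I : {I : Finset (Fin n) // 2 * I.card < n} => evenMonomial n I.1) =
      span ℝ (Set.range (evenMonomial n)) := by
  refine le_antisymm (span_mono (Set.range_subset_iff.2 fun I => ⟨I.1, rfl⟩)) (span_le.2 ?_)
  rintro _ ⟨I, rfl⟩
  by_cases hI : 2 * I.card < n
  · exact subset_span ⟨⟨I, hI⟩, rfl⟩
  · have hle : I.card ≤ n := by simpa using card_le_univ I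
    have hIc : 2 * Iᶜ.card < n := by
      rw [card_compl, Fintype.card_fin]
      obtain ⟨k, rfl⟩ := hn
      omega
    rw [← evenMonomial_compl]
    exact subset_span ⟨⟨Iᶜ, hIc⟩, rfl⟩

end Monomials

/-- For `n` odd, the monomials `e_I` with `|I| < n/2` form a basis of the space of
real-valued functions on `EVEN_n`: they are linearly independent and they span. -/
theorem even_monomials_basis_of_odd (n : ℕ) (hn : Odd n) :
    LinearIndependent ℝ
        (fun I : {I : Finset (Fin n) // 2 * I.card < n} => evenMonomial n I.1) ∧
      Submodule.span ℝ
          (Set.range fun I : {I : Finset (Fin n) // 2 * I.card < n} =>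
            evenMonomial n I.1) = ⊤ := by
  have hspan := (span_range_small_evenMonomial hn).trans span_range_evenMonomial
  refine ⟨linearIndependent_of_top_le_span_of_card_eq_finrank hspan.ge ?_, hspan⟩
  rw [Module.finrank_fintype_fun_eq_card]
  have := (two_mul_card_small_finsets hn).trans (EvenPt.two_mul_card hn).symm
  omega
end

section
/- For n ≥ 3, a point (x₁,…,x_n) ∈ ℝⁿ belongs to the parity polytope PAR_n if and only if there exists z ∈ ℝ such that (x₁,x₂,z) ∈ PAR₃ and (z,x₃,…,x_n) ∈ PAR_{n−1}. -/
/-- The parity polytope `PAR_n`: the convex hull of the `±1` vectors with an even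
number of `-1`'s. -/
def PAR (n : ℕ) : Set (Fin n → ℝ) :=
  convexHull ℝ {x : Fin n → ℝ | (∀ i, x i = 1 ∨ x i = -1) ∧ ∏ i, x i = 1}

lemma mem_PAR_iff {n : ℕ} (x : Fin n → ℝ) :
    x ∈ PAR n ↔ ∃ (ι : Type) (t : Finset ι) (w : ι → ℝ) (v : ι → Fin n → ℝ),
      (∀ i ∈ t, 0 ≤ w i) ∧ (∑ i ∈ t, w i) = 1 ∧
      (∀ i ∈ t, (∀ j, v i j = 1 ∨ v i j = -1) ∧ ∏ j, v i j = 1) ∧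
      ∀ j, x j = ∑ i ∈ t, w i * v i j := by
  rw [PAR, convexHull_eq]
  constructor
  · rintro ⟨ι, t, w, v, hw0, hw1, hv, rfl⟩
    refine ⟨ι, t, w, v, hw0, hw1, hv, fun j => ?_⟩
    rw [Finset.centerMass_eq_of_sum_1 _ _ hw1]
    simp [Finset.sum_apply]
  · rintro ⟨ι, t, w, v, hw0, hw1, hv, hx⟩
    refine ⟨ι, t, w, v, hw0, hw1, hv, ?_⟩
    rw [Finset.centerMass_eq_of_sum_1 _ _ hw1]
    funext j
    rw [hx j]
    simp [Finset.sum_apply]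

lemma PAR_forward (m : ℕ) (x : Fin (m+3) → ℝ) (hx : x ∈ PAR (m+3)) :
    ∃ z : ℝ,
      (![x ⟨0, by omega⟩, x ⟨1, by omega⟩, z] ∈ PAR 3) ∧
      ((fun i : Fin (m+2) =>
          if (i : ℕ) = 0 then z
          else x ⟨(i : ℕ) + 1, by have := i.isLt; omega⟩) ∈ PAR (m+2)) := by
  rw [mem_PAR_iff] at hx
  obtain ⟨ι, t, w, v, hw0, hw1, hv, hxc⟩ := hx
  refine ⟨∑ i ∈ t, w i * (v i 0 * v i 1), ?_, ?_⟩
  · rw [mem_PAR_iff]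
    refine ⟨ι, t, w, fun i => ![v i 0, v i 1, v i 0 * v i 1], hw0, hw1, fun i hi => ?_, ?_⟩
    · obtain ⟨h1, h2⟩ := hv i hi
      constructor
      · intro j
        fin_cases j <;> simp
        · exact h1 0
        · exact h1 1
        · rcases h1 0 with h | h <;> rcases h1 1 with h' | h' <;> simp [h, h']
      · rw [Fin.prod_univ_three]
        simp only [Matrix.cons_val_zero, Matrix.cons_val_one, Matrix.head_cons,
          Matrix.cons_val_two, Matrix.tail_cons]
        rcases h1 0 with h | h <;> rcases h1 1 with h' | h' <;> simp [h, h']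
    · intro j
      fin_cases j <;> simp
      · have := hxc 0
        simpa using this
      · have := hxc 1
        simpa using this
  · rw [mem_PAR_iff]
    refine ⟨ι, t, w,
      fun i => fun j : Fin (m+2) =>
        if (j : ℕ) = 0 then v i 0 * v i 1 else v i ⟨(j : ℕ) + 1, by have := j.isLt; omega⟩,
      hw0, hw1, fun i hi => ?_, ?_⟩
    · obtain ⟨h1, h2⟩ := hv i hi
      constructor
      · intro j
        by_cases hj : (j : ℕ) = 0
        · rcases h1 0 with h | h <;> rcases h1 1 with h' | h' <;> simp [hj, h, h']
        · simp only [hj, if_neg]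
          exact h1 _
      · rw [Fin.prod_univ_succ]
        rw [Fin.prod_univ_succ] at h2
        rw [Fin.prod_univ_succ] at h2
        simp only [Fin.val_zero, if_pos rfl, if_true, Fin.val_succ, Nat.succ_ne_zero, if_false]
        have he : ∀ j : Fin (m+1), v i ⟨(j : ℕ) + 1 + 1, by omega⟩ = v i j.succ.succ := by
          intro j
          congr 1
        rw [Finset.prod_congr rfl (fun j _ => he j)]
        rw [Fin.succ_zero_eq_one] at h2
        rcases h1 0 with h | h <;> rcases h1 1 with h' | h' <;>
          rw [h, h'] at h2 ⊢ <;> nlinarith [h2]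
    · intro j
      by_cases hj : (j : ℕ) = 0
      · simp only [hj, if_pos rfl, if_true]
      · simp only [hj, if_neg, ite_false]
        exact hxc _

lemma PAR_backward (m : ℕ) (x : Fin (m+3) → ℝ) (z : ℝ)
    (h3 : ![x ⟨0, by omega⟩, x ⟨1, by omega⟩, z] ∈ PAR 3)
    (hr : (fun i : Fin (m+2) =>
        if (i : ℕ) = 0 then z
        else x ⟨(i : ℕ) + 1, by have := i.isLt; omega⟩) ∈ PAR (m+2)) :
    x ∈ PAR (m+3) := by
  rw [mem_PAR_iff] at h3 hr ⊢
  obtain ⟨ι, t, α, p, hα0, hα1, hp, ha⟩ := h3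
  obtain ⟨κ, u, β, q, hβ0, hβ1, hq, hb⟩ := hr
  have ha0 : x ⟨0, by omega⟩ = ∑ j ∈ t, α j * p j 0 := by simpa using ha 0
  have ha1 : x ⟨1, by omega⟩ = ∑ j ∈ t, α j * p j 1 := by simpa using ha 1
  have ha2 : z = ∑ j ∈ t, α j * p j 2 := by simpa using ha 2
  have hb0 : z = ∑ k ∈ u, β k * q k 0 := by simpa using hb 0
  set s : ℝ := (1 + z) / 2 with hs
  -- generic splitting lemma
  have key : ∀ (ι' : Type) (t' : Finset ι') (γ : ι' → ℝ) (r : ι' → ℝ),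
      (∀ i ∈ t', 0 ≤ γ i) → (∑ i ∈ t', γ i) = 1 → (∀ i ∈ t', r i = 1 ∨ r i = -1) →
      (∑ i ∈ t', γ i * r i) = z →
      (∑ i ∈ t'.filter (fun i => r i = 1), γ i) = s ∧
      (∑ i ∈ t'.filter (fun i => ¬ r i = 1), γ i) = 1 - s := by
    intro ι' t' γ r h0 h1 hr1 hz
    have hsplit := Finset.sum_filter_add_sum_filter_not t' (fun i => r i = 1) γ
    have hzz : (∑ i ∈ t'.filter (fun i => r i = 1), γ i)
        - (∑ i ∈ t'.filter (fun i => ¬ r i = 1), γ i) = z := by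
      rw [← hz, ← Finset.sum_filter_add_sum_filter_not t' (fun i => r i = 1)
        (fun i => γ i * r i)]
      have e1 : ∑ i ∈ t'.filter (fun i => r i = 1), γ i * r i
          = ∑ i ∈ t'.filter (fun i => r i = 1), γ i :=
        Finset.sum_congr rfl fun i hi => by rw [(Finset.mem_filter.1 hi).2, mul_one]
      have e2 : ∑ i ∈ t'.filter (fun i => ¬ r i = 1), γ i * r i
          = ∑ i ∈ t'.filter (fun i => ¬ r i = 1), -γ i :=
        Finset.sum_congr rfl fun i hi => by
          have h := Finset.mem_filter.1 hi
          rcases hr1 i h.1 with h' | h'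
          · exact absurd h' h.2
          · rw [h']; ring
      rw [e1, e2, Finset.sum_neg_distrib]
      ring
    refine ⟨?_, ?_⟩ <;> rw [hs] <;> linarith [hsplit, hzz, h1]
  obtain ⟨hsA, hsA'⟩ := key ι t α (fun j => p j 2) hα0 hα1
    (fun j hj => (hp j hj).1 2) ha2.symm
  obtain ⟨hsB, hsB'⟩ := key κ u β (fun k => q k 0) hβ0 hβ1
    (fun k hk => (hq k hk).1 0) hb0.symm
  have s0 : 0 ≤ s := hsA ▸ Finset.sum_nonneg fun i hi => hα0 i (Finset.mem_filter.1 hi).1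
  have s1 : 0 ≤ 1 - s := hsA' ▸ Finset.sum_nonneg fun i hi => hα0 i (Finset.mem_filter.1 hi).1
  have hαz : s = 0 → ∀ j ∈ t, p j 2 = 1 → α j = 0 := by
    intro h0 j hj hpj
    exact (Finset.sum_eq_zero_iff_of_nonneg
      (fun i hi => hα0 i (Finset.mem_filter.1 hi).1)).1 (hsA.trans h0) j
      (Finset.mem_filter.2 ⟨hj, hpj⟩)
  have hαz' : 1 - s = 0 → ∀ j ∈ t, ¬ p j 2 = 1 → α j = 0 := by
    intro h0 j hj hpj
    exact (Finset.sum_eq_zero_iff_of_nonneg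
      (fun i hi => hα0 i (Finset.mem_filter.1 hi).1)).1 (hsA'.trans h0) j
      (Finset.mem_filter.2 ⟨hj, hpj⟩)
  have hβz : s = 0 → ∀ k ∈ u, q k 0 = 1 → β k = 0 := by
    intro h0 k hk hqk
    exact (Finset.sum_eq_zero_iff_of_nonneg
      (fun i hi => hβ0 i (Finset.mem_filter.1 hi).1)).1 (hsB.trans h0) k
      (Finset.mem_filter.2 ⟨hk, hqk⟩)
  have hβz' : 1 - s = 0 → ∀ k ∈ u, ¬ q k 0 = 1 → β k = 0 := by
    intro h0 k hk hqk
    exact (Finset.sum_eq_zero_iff_of_nonneg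
      (fun i hi => hβ0 i (Finset.mem_filter.1 hi).1)).1 (hsB'.trans h0) k
      (Finset.mem_filter.2 ⟨hk, hqk⟩)
  -- the glued data
  set W : ι × κ → ℝ :=
    fun jk => α jk.1 * β jk.2 / (if p jk.1 2 = 1 then s else 1 - s) with hW
  set g : ι × κ → Fin (m+3) → ℝ := fun jk i =>
    if (i : ℕ) = 0 then p jk.1 0
    else if (i : ℕ) = 1 then p jk.1 1
    else q jk.2 ⟨(i : ℕ) - 1, by have := i.isLt; omega⟩ with hg
  have g0 : ∀ (jk : ι × κ) (h : 0 < m+3), g jk ⟨0, h⟩ = p jk.1 0 := by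
    intro jk h; simp [hg]
  have g1 : ∀ (jk : ι × κ) (h : 1 < m+3), g jk ⟨1, h⟩ = p jk.1 1 := by
    intro jk h; simp [hg]
  have g2 : ∀ (jk : ι × κ) (c : ℕ) (h : c + 2 < m+3),
      g jk ⟨c+2, h⟩ = q jk.2 ⟨c+1, by omega⟩ := by
    intro jk c h; simp [hg]
  have rowsum : ∀ j ∈ t, (∑ k ∈ u, if p j 2 = q k 0 then W (j, k) else 0) = α j := by
    intro j hj
    rcases (hp j hj).1 2 with hpj | hpj
    · have e : ∀ k ∈ u, (if p j 2 = q k 0 then W (j, k) else 0)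
          = (if q k 0 = 1 then α j / s * β k else 0) := by
        intro k _
        by_cases h : q k 0 = 1
        · rw [if_pos (by rw [hpj, h]), if_pos h, hW]
          dsimp only
          rw [if_pos hpj]; ring
        · rw [if_neg (fun hh => h (by rw [← hh, hpj])), if_neg h]
      rw [Finset.sum_congr rfl e, ← Finset.sum_filter, ← Finset.mul_sum, hsB]
      by_cases hs0 : s = 0
      · rw [hs0, mul_zero, hαz hs0 j hj hpj]
      · field_simp
    · have hp1 : ¬ p j 2 = 1 := by rw [hpj]; norm_num
      have e : ∀ k ∈ u, (if p j 2 = q k 0 then W (j, k) else 0)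
          = (if ¬ q k 0 = 1 then α j / (1 - s) * β k else 0) := by
        intro k hk
        by_cases h : q k 0 = 1
        · rw [if_neg (fun hh => by rw [hpj, h] at hh; norm_num at hh), if_neg (not_not.2 h)]
        · have hqk : q k 0 = -1 := ((hq k hk).1 0).resolve_left h
          rw [if_pos (by rw [hpj, hqk]), if_pos h, hW]
          dsimp only
          rw [if_neg hp1]; ring
      rw [Finset.sum_congr rfl e, ← Finset.sum_filter, ← Finset.mul_sum, hsB']
      by_cases hs0 : (1 : ℝ) - s = 0
      · rw [hs0, mul_zero, hαz' hs0 j hj hp1]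
      · field_simp
  have colsum : ∀ k ∈ u, (∑ j ∈ t, if p j 2 = q k 0 then W (j, k) else 0) = β k := by
    intro k hk
    rcases (hq k hk).1 0 with hqk | hqk
    · have e : ∀ j ∈ t, (if p j 2 = q k 0 then W (j, k) else 0)
          = (if p j 2 = 1 then β k / s * α j else 0) := by
        intro j _
        by_cases h : p j 2 = 1
        · rw [if_pos (by rw [h, hqk]), if_pos h, hW]
          dsimp only
          rw [if_pos h]; ring
        · rw [if_neg (fun hh => h (by rw [hh, hqk])), if_neg h]
      rw [Finset.sum_congr rfl e, ← Finset.sum_filter, ← Finset.mul_sum, hsA]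
      by_cases hs0 : s = 0
      · rw [hs0, mul_zero, hβz hs0 k hk hqk]
      · field_simp
    · have hq1 : ¬ q k 0 = 1 := by rw [hqk]; norm_num
      have e : ∀ j ∈ t, (if p j 2 = q k 0 then W (j, k) else 0)
          = (if ¬ p j 2 = 1 then β k / (1 - s) * α j else 0) := by
        intro j hj
        by_cases h : p j 2 = 1
        · rw [if_neg (fun hh => by rw [h, hqk] at hh; norm_num at hh), if_neg (not_not.2 h)]
        · have hpj : p j 2 = -1 := ((hp j hj).1 2).resolve_left h
          rw [if_pos (by rw [hpj, hqk]), if_pos h, hW]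
          dsimp only
          rw [if_neg h]; ring
      rw [Finset.sum_congr rfl e, ← Finset.sum_filter, ← Finset.mul_sum, hsA']
      by_cases hs0 : (1 : ℝ) - s = 0
      · rw [hs0, mul_zero, hβz' hs0 k hk hq1]
      · field_simp
  refine ⟨ι × κ, (t ×ˢ u).filter (fun jk => p jk.1 2 = q jk.2 0), W, g, ?_, ?_, ?_, ?_⟩
  · rintro ⟨j, k⟩ hjk
    obtain ⟨hmem, -⟩ := Finset.mem_filter.1 hjk
    obtain ⟨hjt, hku⟩ := Finset.mem_product.1 hmem
    rw [hW]
    dsimp only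
    apply div_nonneg (mul_nonneg (hα0 j hjt) (hβ0 k hku))
    split
    · exact s0
    · exact s1
  · rw [Finset.sum_filter, Finset.sum_product,
      Finset.sum_congr rfl (fun j hj => rowsum j hj)]
    exact hα1
  · rintro ⟨j, k⟩ hjk
    obtain ⟨hmem, hcond⟩ := Finset.mem_filter.1 hjk
    obtain ⟨hjt, hku⟩ := Finset.mem_product.1 hmem
    dsimp only at hcond
    constructor
    · intro i
      obtain ⟨iv, hiv⟩ := i
      match iv, hiv with
      | 0, hiv => rw [g0 (j, k) hiv]; exact (hp j hjt).1 0
      | 1, hiv => rw [g1 (j, k) hiv]; exact (hp j hjt).1 1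
      | (c+2), hiv => rw [g2 (j, k) c hiv]; exact (hq k hku).1 _
    · have hP := (hp j hjt).2
      rw [Fin.prod_univ_three] at hP
      have hQ := (hq k hku).2
      rw [Fin.prod_univ_succ] at hQ
      rw [Fin.prod_univ_succ, Fin.prod_univ_succ]
      have e0 : g (j, k) 0 = p j 0 := by simp [hg]
      have e1 : g (j, k) (Fin.succ (0 : Fin (m+2))) = p j 1 := by
        rw [Fin.succ_zero_eq_one]; simp [hg]
      have e2 : ∀ i : Fin (m+1), g (j, k) i.succ.succ = q k i.succ := by
        intro i
        have hi : i.succ.succ = (⟨(i : ℕ) + 2, by omega⟩ : Fin (m+3)) := by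
          ext; simp [Fin.val_succ]
        rw [hi, g2 (j, k) (i : ℕ) (by omega)]
        congr 1
      rw [e0, e1, Finset.prod_congr rfl (fun i _ => e2 i)]
      rcases (hp j hjt).1 2 with h2 | h2
      · have hq0 : q k 0 = 1 := hcond.symm.trans h2
        rw [hq0, one_mul] at hQ
        rw [h2] at hP
        rw [hQ]
        linear_combination hP
      · have hq0 : q k 0 = -1 := hcond.symm.trans h2
        rw [hq0] at hQ
        have hQ1 : (∏ i : Fin (m+1), q k i.succ) = -1 := by linarith
        rw [h2] at hP
        rw [hQ1]
        linear_combination hP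
  · intro i
    rw [Finset.sum_filter]
    obtain ⟨iv, hiv⟩ := i
    match iv, hiv with
    | 0, hiv =>
      rw [Finset.sum_product]
      have e : ∀ j ∈ t,
          (∑ k ∈ u, if p j 2 = q k 0 then W (j, k) * g (j, k) ⟨0, hiv⟩ else 0)
            = α j * p j 0 := by
        intro j hj
        have : (∑ k ∈ u, if p j 2 = q k 0 then W (j, k) * g (j, k) ⟨0, hiv⟩ else 0)
            = (∑ k ∈ u, if p j 2 = q k 0 then W (j, k) else 0) * p j 0 := by
          rw [Finset.sum_mul]
          refine Finset.sum_congr rfl fun k _ => ?_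
          split
          · rw [g0 (j, k) hiv]
          · rw [zero_mul]
        rw [this, rowsum j hj]
      rw [Finset.sum_congr rfl e]
      exact ha0
    | 1, hiv =>
      rw [Finset.sum_product]
      have e : ∀ j ∈ t,
          (∑ k ∈ u, if p j 2 = q k 0 then W (j, k) * g (j, k) ⟨1, hiv⟩ else 0)
            = α j * p j 1 := by
        intro j hj
        have : (∑ k ∈ u, if p j 2 = q k 0 then W (j, k) * g (j, k) ⟨1, hiv⟩ else 0)
            = (∑ k ∈ u, if p j 2 = q k 0 then W (j, k) else 0) * p j 1 := by
          rw [Finset.sum_mul]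
          refine Finset.sum_congr rfl fun k _ => ?_
          split
          · rw [g1 (j, k) hiv]
          · rw [zero_mul]
        rw [this, rowsum j hj]
      rw [Finset.sum_congr rfl e]
      exact ha1
    | (c+2), hiv =>
      rw [Finset.sum_product_right]
      have e : ∀ k ∈ u,
          (∑ j ∈ t, if p j 2 = q k 0 then W (j, k) * g (j, k) ⟨c+2, hiv⟩ else 0)
            = β k * q k ⟨c+1, by omega⟩ := by
        intro k hk
        have : (∑ j ∈ t, if p j 2 = q k 0 then W (j, k) * g (j, k) ⟨c+2, hiv⟩ else 0)
            = (∑ j ∈ t, if p j 2 = q k 0 then W (j, k) else 0) * q k ⟨c+1, by omega⟩ := by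
          rw [Finset.sum_mul]
          refine Finset.sum_congr rfl fun j _ => ?_
          split
          · rw [g2 (j, k) c hiv]
          · rw [zero_mul]
        rw [this, colsum k hk]
      rw [Finset.sum_congr rfl e]
      have hbc := hb ⟨c+1, by omega⟩
      dsimp only at hbc
      rw [if_neg (Nat.succ_ne_zero c)] at hbc
      exact hbc


/-- For `n ≥ 3`, `x ∈ PAR_n` iff there exists `z ∈ ℝ` with `(x₁, x₂, z) ∈ PAR₃` and
`(z, x₃, …, x_n) ∈ PAR_{n-1}`. -/
theorem PAR_glue (n : ℕ) (hn : 3 ≤ n) (x : Fin n → ℝ) :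
    x ∈ PAR n ↔
      ∃ z : ℝ,
        (![x ⟨0, by omega⟩, x ⟨1, by omega⟩, z] ∈ PAR 3) ∧
        ((fun i : Fin (n - 1) =>
            if (i : ℕ) = 0 then z
            else x ⟨(i : ℕ) + 1, by have := i.isLt; omega⟩) ∈ PAR (n - 1)) := by
  obtain ⟨m, rfl⟩ : ∃ m, n = m + 3 := ⟨n - 3, by omega⟩
  constructor
  · intro hx
    exact PAR_forward m x hx
  · rintro ⟨z, h3, hr⟩
    exact PAR_backward m x z h3 hr
end

section
/- The parity polytope satisfies PAR_n = conv(⋃_{k even, 0 ≤ k ≤ n} S_k), where S_k = {x ∈ [-1,1]ⁿ : ∑_{i=1}^n x_i = n − 2k} is the k-th slice of the hypercube, and moreover S_k = conv{x ∈ {-1,1}ⁿ : x has exactly k coordinates equal to −1}. -/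
/-- The `k`-th slice of the hypercube: `{x ∈ [-1,1]ⁿ : ∑ᵢ xᵢ = n - 2k}`. -/
def cubeSlice (n k : ℕ) : Set (Fin n → ℝ) :=
  {x | (∀ i, x i ∈ Set.Icc (-1 : ℝ) 1) ∧ ∑ i, x i = (n : ℝ) - 2 * k}

/-!
Moving a point of the slice `S_k` along `eᵢ - eⱼ` keeps its coordinate sum. So if `x ∈ S_k` has two
fractional coordinates `i ≠ j` (in `(-1, 1)`), it lies on a segment in that direction whose endpoints
are still in `S_k` but have fewer fractional coordinates. A single fractional coordinate cannot
occur: the others being `±1`, the coordinate sum would force it to be an odd integer. By induction,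
`S_k` is the hull of its `±1` points, i.e. of the vertices with `k` coordinates `-1`. Such a vertex
has coordinate product `(-1)ᵏ`, so the vertices of `PAR_n` are those of the even slices, and taking
convex hulls gives the first identity.
-/

open Finset

lemma convexHull_biUnion_convexHull {𝕜 E ι : Type*} [Semiring 𝕜] [PartialOrder 𝕜]
    [AddCommMonoid E] [Module 𝕜 E] (s : Set ι) (t : ι → Set E) :
    convexHull 𝕜 (⋃ i ∈ s, convexHull 𝕜 (t i)) = convexHull 𝕜 (⋃ i ∈ s, t i) :=
  le_antisymm
    (convexHull_min
      (Set.iUnion₂_subset fun _ hi => convexHull_mono (Set.subset_biUnion_of_mem hi))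
      (convex_convexHull 𝕜 _))
    (convexHull_mono (Set.biUnion_mono subset_rfl fun _ _ => subset_convexHull 𝕜 _))

lemma mem_segment_add_smul_add_smul {𝕜 E : Type*} [Field 𝕜] [LinearOrder 𝕜]
    [IsStrictOrderedRing 𝕜] [AddCommGroup E] [Module 𝕜 E] (x d : E) {s t : 𝕜} (hs : s ≤ 0)
    (ht : 0 ≤ t) : x ∈ segment 𝕜 (x + s • d) (x + t • d) := by
  have h : AffineMap.lineMap x (x + d) (0 : 𝕜) ∈
      segment 𝕜 (AffineMap.lineMap x (x + d) s) (AffineMap.lineMap x (x + d) t) := by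
    rw [← image_segment, segment_eq_Icc (hs.trans ht)]
    exact Set.mem_image_of_mem _ ⟨hs, ht⟩
  simpa [AffineMap.lineMap_apply_module', add_comm] using h

section SignVector

variable {ι : Type*} [Fintype ι] {x : ι → ℝ}

lemma sum_eq_card_sub_two_mul_card_eq_neg_one (hx : ∀ i, x i = 1 ∨ x i = -1) :
    ∑ i, x i = Fintype.card ι - 2 * #{i | x i = -1} := by
  have hxi : ∀ i, x i = 1 - 2 * if x i = -1 then 1 else 0 := fun i => by
    rcases hx i with h | h <;> norm_num [h]
  rw [sum_congr rfl fun i _ => hxi i, sum_sub_distrib, ← mul_sum, sum_boole]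
  simp

lemma prod_eq_neg_one_pow_card_eq_neg_one (hx : ∀ i, x i = 1 ∨ x i = -1) :
    ∏ i, x i = (-1) ^ #{i | x i = -1} := by
  have hxi : ∀ i, x i = (-1) ^ if x i = -1 then 1 else 0 := fun i => by
    rcases hx i with h | h <;> norm_num [h]
  rw [prod_congr rfl fun i _ => hxi i, prod_pow_eq_pow_sum, sum_boole, Nat.cast_id]

lemma ncard_setOf_eq_card_filter (p : ι → Prop) [DecidablePred p] :
    {i | p i}.ncard = #{i | p i} := by
  rw [← coe_filter_univ, Set.ncard_coe_finset]

end SignVector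

def sliceVertices (n k : ℕ) : Set (Fin n → ℝ) :=
  {x | (∀ i, x i = 1 ∨ x i = -1) ∧ {i : Fin n | x i = -1}.ncard = k}

lemma mem_sliceVertices_iff {n k : ℕ} {x : Fin n → ℝ} (hx : ∀ i, x i = 1 ∨ x i = -1) :
    x ∈ sliceVertices n k ↔ ∑ i, x i = (n : ℝ) - 2 * k := by
  show (_ ∧ _) ↔ _
  rw [ncard_setOf_eq_card_filter, sum_eq_card_sub_two_mul_card_eq_neg_one hx, Fintype.card_fin]
  constructor
  · rintro ⟨-, h⟩
    rw [h]
  · intro h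
    exact ⟨hx, by exact_mod_cast (by linarith : (#{i | x i = -1} : ℝ) = k)⟩

lemma sliceVertices_subset_cubeSlice (n k : ℕ) : sliceVertices n k ⊆ cubeSlice n k :=
  fun x hx => ⟨fun i => by rcases hx.1 i with h | h <;> norm_num [h],
    (mem_sliceVertices_iff hx.1).1 hx⟩

lemma convex_cubeSlice (n k : ℕ) : Convex ℝ (cubeSlice n k) := by
  have hsum : IsLinearMap ℝ fun x : Fin n → ℝ => ∑ i, x i :=
    ⟨fun x y => sum_add_distrib, fun c x => (mul_sum _ _ _).symm⟩
  have h : cubeSlice n k = Set.Icc (-1) 1 ∩ {x | ∑ i, x i = (n : ℝ) - 2 * k} := by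
    ext x
    simp [cubeSlice, Pi.le_def, forall_and]
  rw [h]
  exact (convex_Icc _ _).inter (convex_hyperplane hsum _)

lemma setOf_prod_eq_one_eq_biUnion_sliceVertices (n : ℕ) :
    {x : Fin n → ℝ | (∀ i, x i = 1 ∨ x i = -1) ∧ ∏ i, x i = 1}
      = ⋃ k ∈ {k : ℕ | k ≤ n ∧ Even k}, sliceVertices n k := by
  ext x
  simp only [Set.mem_iUnion, exists_prop, sliceVertices]
  constructor
  · rintro ⟨hx, hprod⟩
    refine ⟨_, ⟨?_, ?_⟩, hx, rfl⟩
    all_goals rw [ncard_setOf_eq_card_filter]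
    · simpa using card_filter_le (univ : Finset (Fin n)) _
    · rwa [prod_eq_neg_one_pow_card_eq_neg_one hx, neg_one_pow_eq_one_iff_even (by norm_num)]
        at hprod
  · rintro ⟨k, ⟨-, hk⟩, hx, rfl⟩
    rw [ncard_setOf_eq_card_filter] at hk
    exact ⟨hx, by rw [prod_eq_neg_one_pow_card_eq_neg_one hx, hk.neg_one_pow]⟩

noncomputable def fractionalCoords {ι : Type*} [Fintype ι] (x : ι → ℝ) : Finset ι :=
  {i | x i ∈ Set.Ioo (-1) 1}

@[simp]
lemma mem_fractionalCoords {ι : Type*} [Fintype ι] {x : ι → ℝ} {i : ι} :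
    i ∈ fractionalCoords x ↔ x i ∈ Set.Ioo (-1) 1 := by
  simp [fractionalCoords]

lemma card_fractionalCoords_add_smul_lt {ι : Type*} [Fintype ι] [DecidableEq ι] {x : ι → ℝ}
    {i j : ι} (hij : i ≠ j) (hi : i ∈ fractionalCoords x) (hj : j ∈ fractionalCoords x) {t : ℝ}
    (ht : x i + t ∉ Set.Ioo (-1) 1 ∨ x j - t ∉ Set.Ioo (-1) 1) :
    #(fractionalCoords (x + t • (Pi.single i 1 - Pi.single j 1))) < #(fractionalCoords x) := by
  refine card_lt_card ((ssubset_iff_of_subset fun l hl => ?_).2 ?_)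
  · rcases eq_or_ne l i with rfl | hli
    · exact hi
    rcases eq_or_ne l j with rfl | hlj
    · exact hj
    simpa [hli, hlj] using hl
  · rcases ht with h | h
    · exact ⟨i, hi, by simpa [hij] using h⟩
    · exact ⟨j, hj, by simpa [hij.symm, sub_eq_add_neg] using h⟩

section Slice

variable {n k : ℕ} {x : Fin n → ℝ}

lemma eq_one_or_eq_neg_one_of_notMem_fractionalCoords (hx : x ∈ cubeSlice n k) {i : Fin n}
    (hi : i ∉ fractionalCoords x) : x i = 1 ∨ x i = -1 := by
  have h : x i ∈ Set.Icc (-1 : ℝ) 1 \ Set.Ioo (-1) 1 := ⟨hx.1 i, mem_fractionalCoords.not.1 hi⟩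
  rw [Set.Icc_sdiff_Ioo_same (by norm_num)] at h
  exact h.symm

lemma mem_sliceVertices_of_fractionalCoords_eq_empty (hx : x ∈ cubeSlice n k)
    (h : fractionalCoords x = ∅) : x ∈ sliceVertices n k := by
  have hpm i := eq_one_or_eq_neg_one_of_notMem_fractionalCoords hx (h ▸ notMem_empty i)
  exact (mem_sliceVertices_iff hpm).2 hx.2

lemma card_fractionalCoords_ne_one (hx : x ∈ cubeSlice n k) : #(fractionalCoords x) ≠ 1 := by
  intro h
  obtain ⟨i, hi⟩ := card_eq_one.1 h
  set y := Function.update x i 1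
  have hy : ∀ j, y j = 1 ∨ y j = -1 := fun j => by
    rcases eq_or_ne j i with rfl | hj
    · simp [y]
    · simpa [y, hj] using eq_one_or_eq_neg_one_of_notMem_fractionalCoords hx (by simp [hi, hj])
  have hsum : ∑ j, y j = ∑ j, x j - x i + 1 := by
    rw [sum_update_of_mem (mem_univ i), sum_eq_add_sum_sdiff_singleton_of_mem (mem_univ i) x]
    ring
  rw [sum_eq_card_sub_two_mul_card_eq_neg_one hy, hx.2, Fintype.card_fin] at hsum
  have hxi : x i ∈ Set.Ioo (-1) 1 := mem_fractionalCoords.1 (hi ▸ mem_singleton_self i)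
  have h1 : #{j | y j = -1} < k := by
    exact_mod_cast (by linarith [hxi.2] : (#{j | y j = -1} : ℝ) < k)
  have h2 : k < #{j | y j = -1} + 1 := by
    exact_mod_cast (by linarith [hxi.1] : (k : ℝ) < #{j | y j = -1} + 1)
  omega

lemma add_smul_single_sub_single_mem_cubeSlice (hx : x ∈ cubeSlice n k) {i j : Fin n}
    (hij : i ≠ j) {t : ℝ} (hi : x i + t ∈ Set.Icc (-1) 1) (hj : x j - t ∈ Set.Icc (-1) 1) :
    x + t • (Pi.single i 1 - Pi.single j 1) ∈ cubeSlice n k := by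
  refine ⟨fun l => ?_, ?_⟩
  · rcases eq_or_ne l i with rfl | hli
    · simpa [hij] using hi
    rcases eq_or_ne l j with rfl | hlj
    · simpa [hli, sub_eq_add_neg] using hj
    · simpa [hli, hlj] using hx.1 l
  · simp [sum_add_distrib, mul_sub, sum_sub_distrib, ← mul_sum, hx.2]

lemma exists_mem_segment_card_fractionalCoords_lt (hx : x ∈ cubeSlice n k)
    (h : 1 < #(fractionalCoords x)) :
    ∃ y ∈ cubeSlice n k, ∃ z ∈ cubeSlice n k, #(fractionalCoords y) < #(fractionalCoords x) ∧
      #(fractionalCoords z) < #(fractionalCoords x) ∧ x ∈ segment ℝ y z := by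
  obtain ⟨i, hi, j, hj, hij⟩ := one_lt_card.1 h
  have hxi := mem_fractionalCoords.1 hi
  have hxj := mem_fractionalCoords.1 hj
  -- the largest steps from `x` along `eⱼ - eᵢ` and `eᵢ - eⱼ` that stay in the cube
  set s := min (1 + x i) (1 - x j)
  set t := min (1 - x i) (x j + 1)
  have hs : 0 < s := lt_min (by linarith [hxi.1]) (by linarith [hxj.2])
  have ht : 0 < t := lt_min (by linarith [hxi.2]) (by linarith [hxj.1])
  have hs₁ : s ≤ 1 + x i := min_le_left _ _
  have hs₂ : s ≤ 1 - x j := min_le_right _ _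
  have ht₁ : t ≤ 1 - x i := min_le_left _ _
  have ht₂ : t ≤ x j + 1 := min_le_right _ _
  refine ⟨_, add_smul_single_sub_single_mem_cubeSlice hx hij (t := -s)
      ⟨by linarith, by linarith⟩ ⟨by linarith, by linarith⟩,
    _, add_smul_single_sub_single_mem_cubeSlice hx hij (t := t)
      ⟨by linarith, by linarith⟩ ⟨by linarith, by linarith⟩,
    card_fractionalCoords_add_smul_lt hij hi hj ?_, card_fractionalCoords_add_smul_lt hij hi hj ?_,
    mem_segment_add_smul_add_smul x _ (neg_nonpos.2 hs.le) ht.le⟩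
  · rcases min_choice (1 + x i) (1 - x j) with h | h
    · left; simp [s, h]
    · right; simp [s, h]
  · rcases min_choice (1 - x i) (x j + 1) with h | h
    · left; simp [t, h]
    · right; simp [t, h]

lemma cubeSlice_eq_convexHull_sliceVertices (n k : ℕ) :
    cubeSlice n k = convexHull ℝ (sliceVertices n k) := by
  refine Set.Subset.antisymm (fun x hx => ?_)
    (convexHull_min (sliceVertices_subset_cubeSlice n k) (convex_cubeSlice n k))
  induction hm : #(fractionalCoords x) using Nat.strong_induction_on generalizing x with
  | _ m ih =>
  rcases lt_trichotomy m 1 with h0 | h1 | h2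
  · exact subset_convexHull ℝ _
      (mem_sliceVertices_of_fractionalCoords_eq_empty hx (card_eq_zero.1 (by omega)))
  · exact absurd (hm.trans h1) (card_fractionalCoords_ne_one hx)
  · obtain ⟨y, hy, z, hz, hyx, hzx, hxyz⟩ :=
      exists_mem_segment_card_fractionalCoords_lt hx (hm ▸ h2)
    exact (convex_convexHull ℝ _).segment_subset
      (ih _ (hm ▸ hyx) _ hy rfl) (ih _ (hm ▸ hzx) _ hz rfl) hxyz

end Slice

/-- `PAR_n` is the convex hull of the union of the even slices of the hypercube, and
each slice `S_k` is the convex hull of the `±1` vectors with exactly `k` coordinates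
equal to `-1`. -/
theorem PAR_eq_convexHull_even_slices (n : ℕ) :
    PAR n = convexHull ℝ (⋃ k ∈ {k : ℕ | k ≤ n ∧ Even k}, cubeSlice n k) ∧
      ∀ k ≤ n,
        cubeSlice n k =
          convexHull ℝ
            {x : Fin n → ℝ |
              (∀ i, x i = 1 ∨ x i = -1) ∧ {i : Fin n | x i = -1}.ncard = k} := by
  refine ⟨?_, fun k _ => cubeSlice_eq_convexHull_sliceVertices n k⟩
  simp_rw [cubeSlice_eq_convexHull_sliceVertices, convexHull_biUnion_convexHull, PAR,
    setOf_prod_eq_one_eq_biUnion_sliceVertices]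
end

section
/- Define the linear functional L_p on real-valued functions on EVEN_n determined on the monomial basis by L_p(e_I) = ∏_{i∈I} p_i for |I| < n/2 (and L_p((e_I+e_{Iᶜ})/2) = 0 if |I| = n/2 when n is even), where p = (1,…,1,−1) ∈ ℝⁿ. Then for any subsets I, J ⊆ [n] with |I|, |J| < n/4, one has L_p(e_I·e_J) = L_p(e_I)·L_p(e_J). -/
/-- The point `p = (1, …, 1, -1)`. -/
def pVec (n : ℕ) : Fin n → ℝ := fun i => if (i : ℕ) = n - 1 then -1 else 1

/-!
For any `±1` vector `x` one has `x^I x^J = x^(I ∆ J)`, both on `EVEN_n` and at `p`. Since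
`|I ∆ J| ≤ |I| + |J| < n / 2`, all three of `L(e_I e_J) = L(e_{I ∆ J})`, `L(e_I)`, `L(e_J)` are
fixed by the low-degree clause of the definition of `L`, and the identity at `p` concludes.
-/

open Finset
open scoped symmDiff

theorem prod_mul_prod_eq_prod_symmDiff {ι M : Type*} [DecidableEq ι] [CommMonoid M]
    {f : ι → M} {s t : Finset ι} (hf : ∀ i ∈ s ∩ t, f i * f i = 1) :
    (∏ i ∈ s, f i) * ∏ i ∈ t, f i = ∏ i ∈ s ∆ t, f i := by
  have hinter : (∏ i ∈ s ∩ t, f i) * ∏ i ∈ s ∩ t, f i = 1 := by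
    rw [← prod_mul_distrib]
    exact prod_eq_one hf
  have hdisj : Disjoint (s ∆ t) (s ∩ t) := disjoint_symmDiff_inf s t
  calc (∏ i ∈ s, f i) * ∏ i ∈ t, f i
      = (∏ i ∈ s ∆ t, f i) * ((∏ i ∈ s ∩ t, f i) * ∏ i ∈ s ∩ t, f i) := by
        rw [← prod_union_inter, ← sup_eq_union, ← symmDiff_sup_inf, sup_eq_union, inf_eq_inter,
          prod_union hdisj, mul_assoc]
    _ = ∏ i ∈ s ∆ t, f i := by rw [hinter, mul_one]

theorem card_symmDiff_le_add {α : Type*} [DecidableEq α] (s t : Finset α) :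
    #(s ∆ t) ≤ #s + #t :=
  (card_le_card symmDiff_subset_union).trans (card_union_le s t)

theorem EvenPt.prod_mul_prod {n : ℕ} (I J : Finset (Fin n)) :
    (fun x : EvenPt n => (∏ i ∈ I, x.1 i) * ∏ i ∈ J, x.1 i) =
      fun x => ∏ i ∈ I ∆ J, x.1 i :=
  funext fun x => prod_mul_prod_eq_prod_symmDiff fun i _ => mul_self_eq_one_iff.mpr (x.2.1 i)

theorem pVec_mul_self {n : ℕ} (i : Fin n) : pVec n i * pVec n i = 1 := by
  unfold pVec
  split_ifs <;> norm_num

theorem Lp_multiplicative_on_low_degree_general (n : ℕ)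
    (L : (EvenPt n → ℝ) →ₗ[ℝ] ℝ)
    (hL1 : ∀ I : Finset (Fin n), 2 * I.card < n →
      L (fun x => ∏ i ∈ I, x.1 i) = ∏ i ∈ I, pVec n i)
    (I J : Finset (Fin n)) (hI : 4 * I.card < n) (hJ : 4 * J.card < n) :
    L (fun x => (∏ i ∈ I, x.1 i) * ∏ i ∈ J, x.1 i) =
      L (fun x => ∏ i ∈ I, x.1 i) * L (fun x => ∏ i ∈ J, x.1 i) := by
  have hIJ : 2 * #(I ∆ J) < n := by
    have := card_symmDiff_le_add I J
    omega
  rw [EvenPt.prod_mul_prod, hL1 _ hIJ, hL1 I (by omega), hL1 J (by omega),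
    prod_mul_prod_eq_prod_symmDiff fun i _ => pVec_mul_self i]

/-- Let `L` be the linear functional on functions on `EVEN_n` determined on the monomial
basis by `L(e_I) = ∏_{i∈I} p_i` for `|I| < n/2` (and `L((e_I + e_{Iᶜ})/2) = 0` for
`|I| = n/2`), where `p = (1,…,1,-1)`. Then `L` is multiplicative on low-degree
monomials: for `|I|, |J| < n/4`, `L(e_I e_J) = L(e_I) L(e_J)`. -/
theorem Lp_multiplicative_on_low_degree (n : ℕ)
    (L : (EvenPt n → ℝ) →ₗ[ℝ] ℝ)
    (hL1 : ∀ I : Finset (Fin n), 2 * I.card < n →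
      L (fun x => ∏ i ∈ I, x.1 i) = ∏ i ∈ I, pVec n i)
    (hL2 : ∀ I : Finset (Fin n), 2 * I.card = n →
      L (fun x => ((∏ i ∈ I, x.1 i) + ∏ i ∈ Iᶜ, x.1 i) / 2) = 0)
    (I J : Finset (Fin n)) (hI : 4 * I.card < n) (hJ : 4 * J.card < n) :
    L (fun x => (∏ i ∈ I, x.1 i) * ∏ i ∈ J, x.1 i) =
      L (fun x => ∏ i ∈ I, x.1 i) * L (fun x => ∏ i ∈ J, x.1 i) :=
  Lp_multiplicative_on_low_degree_general n L hL1 I J hI hJ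
end

section
/- Let G_cube be the group of n×n signed permutation matrices acting on functions on {-1,1}ⁿ by (g·f)(x) = f(g⁻¹x). For each 0 ≤ k ≤ n, the subspace Pol_k(C_n) of functions spanned by the square-free monomials x^I with |I| = k is an irreducible G_cube-invariant subspace of the space of functions on {-1,1}ⁿ, and F({-1,1}ⁿ, ℝ) = Pol₀ ⊕ Pol₁ ⊕ ⋯ ⊕ Pol_n. -/
/-!
The monomials `x^I` are pairwise distinct characters of the group `C_n ≅ (ℤ/2)ⁿ`. Being
`2ⁿ = |C_n|` of them, they form a basis of the functions on `C_n`, and grouping this basis by `|I|`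
gives the direct sum. The sign changes in `G_cube` act on functions as translations of `C_n`, so by
orthogonality of characters an invariant subspace containing `f` contains every `x^J` that occurs
in `f` with a nonzero coefficient; the permutations in `G_cube` then carry `x^J` to every `x^I`
with `|I| = |J|`. Hence a nonzero invariant subspace of `Pol_k` is all of `Pol_k`.
-/

/-- The hypercube `C_n = {-1,1}ⁿ`, as a type. -/
def Cube (n : ℕ) : Type := {x : Fin n → ℝ // ∀ i, x i = 1 ∨ x i = -1}

/-- The action of a signed permutation (given by a permutation `σ` and signs `ε`) on
the hypercube: `x ↦ (ε i * x (σ i))_i`. -/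
def signedAct (n : ℕ) (σ : Equiv.Perm (Fin n)) (ε : Fin n → ℝ)
    (hε : ∀ i, ε i = 1 ∨ ε i = -1) (x : Cube n) : Cube n :=
  ⟨fun i => ε i * x.1 (σ i), by
    intro i
    rcases hε i with h | h <;> rcases x.2 (σ i) with h' | h' <;>
      simp [h, h']⟩

/-- A subspace of functions on the hypercube is `G_cube`-invariant if it is preserved
by all signed permutations. -/
def IsCubeInvariant (n : ℕ) (V : Submodule ℝ (Cube n → ℝ)) : Prop :=
  ∀ (σ : Equiv.Perm (Fin n)) (ε : Fin n → ℝ) (hε : ∀ i, ε i = 1 ∨ ε i = -1),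
    ∀ f ∈ V, (fun x => f (signedAct n σ ε hε x)) ∈ V

/-- `Pol_k(C_n)`: the span of the square-free monomials `x^I` with `|I| = k`. -/
def PolCube (n k : ℕ) : Submodule ℝ (Cube n → ℝ) :=
  Submodule.span ℝ
    {f | ∃ I : Finset (Fin n), I.card = k ∧ f = fun x : Cube n => ∏ i ∈ I, x.1 i}

open Finset

open Classical in
theorem MonoidHom.sum_apply_mul_apply_inv {G R : Type*} [CommGroup G] [Fintype G] [CommRing R]
    [IsDomain R] (φ ψ : G →* R) :
    ∑ x, φ x * ψ x⁻¹ = if φ = ψ then (Fintype.card G : R) else 0 := by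
  have hψ (x : G) : ψ x * ψ x⁻¹ = 1 := by rw [← map_mul, mul_inv_cancel, map_one]
  split_ifs with h
  · subst h
    simp [hψ]
  · refine sum_hom_units_eq_zero (φ * ψ.comp (invMonoidHom : G →* G)) fun h1 => h ?_
    ext x
    have hx : φ x * ψ x⁻¹ = 1 := by simpa using DFunLike.congr_fun h1 x
    exact mul_right_cancel₀ (left_ne_zero_of_mul_eq_one (hψ x⁻¹)) (hx.trans (hψ x).symm)

theorem Module.Basis.isInternal_span_image_fiber {ι κ R M : Type*} [Ring R] [AddCommGroup M]
    [Module R M] [DecidableEq κ] (b : Module.Basis ι R M) (d : ι → κ) :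
    DirectSum.IsInternal fun j => Submodule.span R (b '' (d ⁻¹' {j})) := by
  refine DirectSum.isInternal_submodule_of_iSupIndep_of_iSup_eq_top ?_ ?_
  · refine fun j => (b.linearIndependent.disjoint_span_image
      (disjoint_compl_right (a := d ⁻¹' {j}))).mono_right ?_
    refine iSup₂_le fun i hij => Submodule.span_mono (Set.image_mono fun a ha => ?_)
    exact fun h => hij (ha.symm.trans h)
  · rw [← Submodule.span_iUnion, ← Set.image_iUnion, ← Set.preimage_iUnion,
      Set.iUnion_singleton_eq_range]
    simp

namespace Cube

variable {n : ℕ}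

instance : CommGroup (Cube n) where
  mul x y := ⟨fun i => x.1 i * y.1 i, fun i => by
    rcases x.2 i with h | h <;> rcases y.2 i with h' | h' <;> simp [h, h']⟩
  one := ⟨1, fun _ => Or.inl rfl⟩
  inv x := x
  mul_assoc x y z := Subtype.ext <| funext fun i => mul_assoc (x.1 i) (y.1 i) (z.1 i)
  one_mul x := Subtype.ext <| funext fun i => one_mul (x.1 i)
  mul_one x := Subtype.ext <| funext fun i => mul_one (x.1 i)
  mul_comm x y := Subtype.ext <| funext fun i => mul_comm (x.1 i) (y.1 i)
  inv_mul_cancel x := Subtype.ext <| funext fun i =>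
    show x.1 i * x.1 i = 1 by rcases x.2 i with h | h <;> simp [h]

def ofFinset (S : Finset (Fin n)) : Cube n :=
  ⟨fun i => if i ∈ S then -1 else 1, fun i => by by_cases hi : i ∈ S <;> simp [hi]⟩

noncomputable def finsetEquiv : Finset (Fin n) ≃ Cube n where
  toFun := ofFinset
  invFun x := {i | x.1 i = -1}
  left_inv S := by ext i; by_cases hi : i ∈ S <;> simp [ofFinset, hi]; norm_num
  right_inv x := Subtype.ext <| funext fun i => by
    rcases x.2 i with h | h <;> norm_num [ofFinset, h]

noncomputable instance : Fintype (Cube n) := Fintype.ofEquiv _ finsetEquiv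

def monomial (I : Finset (Fin n)) : Cube n →* ℝ where
  toFun x := ∏ i ∈ I, x.1 i
  map_one' := prod_const_one
  map_mul' _ _ := prod_mul_distrib

lemma monomial_ofFinset_singleton (I : Finset (Fin n)) (j : Fin n) :
    monomial I (ofFinset {j}) = if j ∈ I then -1 else 1 := by
  simp [monomial, ofFinset, prod_ite_eq']

lemma monomial_injective : Function.Injective (monomial (n := n)) := by
  intro I J h
  ext j
  have hj := DFunLike.congr_fun h (ofFinset {j})
  simp only [monomial_ofFinset_singleton] at hj
  split_ifs at hj <;> norm_num at hj <;> tauto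

noncomputable def monomialBasis : Module.Basis (Finset (Fin n)) ℝ (Cube n → ℝ) :=
  basisOfLinearIndependentOfCardEqFinrank'
    (fun I => monomial I)
    ((linearIndependent_monoidHom (Cube n) ℝ).comp _ monomial_injective)
    (by rw [Module.finrank_fintype_fun_eq_card, Fintype.card_congr finsetEquiv])

@[simp]
lemma coe_monomialBasis : ⇑(monomialBasis (n := n)) = fun I => ⇑(monomial I) :=
  coe_basisOfLinearIndependentOfCardEqFinrank' ..

lemma monomial_comp_signedAct (σ : Equiv.Perm (Fin n)) (ε : Fin n → ℝ)
    (hε : ∀ i, ε i = 1 ∨ ε i = -1) (I : Finset (Fin n)) :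
    (fun x => monomial I (signedAct n σ ε hε x)) = (∏ i ∈ I, ε i) • ⇑(monomial (I.image σ)) := by
  funext x
  simp only [monomial, signedAct, MonoidHom.coe_mk, OneHom.coe_mk, Pi.smul_apply, smul_eq_mul,
    prod_mul_distrib, prod_image σ.injective.injOn]

lemma polCube_eq_span_image (k : ℕ) :
    PolCube n k = Submodule.span ℝ (monomialBasis '' {I | I.card = k}) := by
  rw [PolCube, coe_monomialBasis]
  congr 1
  ext f
  exact exists_congr fun _ => and_congr_right' eq_comm

lemma isCubeInvariant_polCube (k : ℕ) : IsCubeInvariant n (PolCube n k) := by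
  intro σ ε hε f hf
  suffices h : (PolCube n k).map (LinearMap.funLeft ℝ ℝ (signedAct n σ ε hε)) ≤ PolCube n k from
    h (Submodule.mem_map_of_mem hf)
  refine (Submodule.map_span_le _ _ _).2 ?_
  rintro _ ⟨I, hI, rfl⟩
  change (fun x => monomial I (signedAct n σ ε hε x)) ∈ _
  rw [monomial_comp_signedAct]
  refine Submodule.smul_mem _ _ (Submodule.subset_span ⟨I.image σ, ?_, rfl⟩)
  rw [card_image_of_injective I σ.injective, hI]

lemma polCube_ne_bot {k : ℕ} (hk : k ≤ n) : PolCube n k ≠ ⊥ := by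
  obtain ⟨I, -, hI⟩ := exists_subset_card_eq (s := (univ : Finset (Fin n))) (by simpa using hk)
  rw [polCube_eq_span_image, Ne, Submodule.span_eq_bot, not_forall]
  refine ⟨monomial I, fun h => one_ne_zero (α := ℝ) ?_⟩
  simpa using congr_fun (h ⟨I, hI, by simp⟩) 1

def translate (y : Cube n) : (Cube n → ℝ) →ₗ[ℝ] Cube n → ℝ :=
  LinearMap.funLeft ℝ ℝ (y⁻¹ * ·)

lemma translate_monomial (y : Cube n) (I : Finset (Fin n)) :
    translate y (monomial I) = monomial I y⁻¹ • ⇑(monomial I) := by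
  funext x
  simp [translate, LinearMap.funLeft_apply]

lemma _root_.IsCubeInvariant.translate_mem {V : Submodule ℝ (Cube n → ℝ)}
    (hV : IsCubeInvariant n V) (y : Cube n) {f : Cube n → ℝ} (hf : f ∈ V) : translate y f ∈ V :=
  hV 1 y⁻¹.1 y⁻¹.2 f hf

noncomputable def monomialProj (J : Finset (Fin n)) : (Cube n → ℝ) →ₗ[ℝ] Cube n → ℝ :=
  ∑ y, monomial J y • translate y

lemma monomialProj_monomial (J I : Finset (Fin n)) :
    monomialProj J (monomial I) =
      (if J = I then (Fintype.card (Cube n) : ℝ) else 0) • ⇑(monomial I) := by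
  simp only [monomialProj, LinearMap.sum_apply, LinearMap.smul_apply, translate_monomial,
    smul_smul, ← Finset.sum_smul, MonoidHom.sum_apply_mul_apply_inv, monomial_injective.eq_iff]

lemma monomialProj_eq (J : Finset (Fin n)) :
    monomialProj J =
      (Fintype.card (Cube n) : ℝ) • (monomialBasis.coord J).smulRight ⇑(monomial J) := by
  refine monomialBasis.ext fun I => ?_
  rw [LinearMap.smul_apply, LinearMap.smulRight_apply, Module.Basis.coord_apply,
    Module.Basis.repr_self, Finsupp.single_apply, coe_monomialBasis, monomialProj_monomial]
  rcases eq_or_ne J I with rfl | hJI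
  · simp
  · simp [hJI, hJI.symm]

variable {V : Submodule ℝ (Cube n → ℝ)}

lemma monomial_mem_of_repr_ne_zero (hV : IsCubeInvariant n V) {f : Cube n → ℝ} (hf : f ∈ V)
    {J : Finset (Fin n)} (hJ : monomialBasis.repr f J ≠ 0) : ⇑(monomial J) ∈ V := by
  have hproj : monomialProj J f ∈ V := by
    rw [monomialProj, LinearMap.sum_apply]
    exact V.sum_mem fun y _ => V.smul_mem _ (hV.translate_mem y hf)
  rw [monomialProj_eq, LinearMap.smul_apply, LinearMap.smulRight_apply,
    Module.Basis.coord_apply] at hproj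
  exact (V.smul_mem_iff hJ).1 ((V.smul_mem_iff (Nat.cast_ne_zero.2 Fintype.card_ne_zero)).1 hproj)

lemma monomial_mem_of_card_eq (hV : IsCubeInvariant n V) {I J : Finset (Fin n)}
    (hJ : ⇑(monomial J) ∈ V) (hIJ : I.card = J.card) : ⇑(monomial I) ∈ V := by
  obtain ⟨σ, hσ⟩ := Set.powersetCard.isPretransitive.exists_smul_eq
    (⟨J, rfl⟩ : Set.powersetCard (Fin n) J.card) ⟨I, hIJ⟩
  have hσ : J.image σ = I := by simpa [Finset.smul_finset_def] using congrArg Subtype.val hσ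
  simpa [monomial_comp_signedAct, hσ] using hV σ 1 (fun _ => Or.inl rfl) _ hJ

theorem eq_bot_or_eq_polCube (hV : IsCubeInvariant n V) {k : ℕ} (hle : V ≤ PolCube n k) :
    V = ⊥ ∨ V = PolCube n k := by
  refine or_iff_not_imp_left.2 fun hbot => le_antisymm hle ?_
  obtain ⟨f, hfV, hf⟩ := Submodule.exists_mem_ne_zero_of_ne_bot hbot
  obtain ⟨J, hJ⟩ : ∃ J, monomialBasis.repr f J ≠ 0 := by
    simpa using mt monomialBasis.forall_coord_eq_zero_iff.1 hf
  have hJk : J.card = k := by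
    have hsupp := (polCube_eq_span_image k ▸ hle hfV : f ∈ _)
    exact (Module.Basis.mem_span_image _).1 hsupp (Finsupp.mem_support_iff.2 hJ)
  rw [PolCube, Submodule.span_le]
  rintro _ ⟨I, hI, rfl⟩
  exact monomial_mem_of_card_eq hV (monomial_mem_of_repr_ne_zero hV hfV hJ) (hI.trans hJk.symm)

theorem isInternal_polCube :
    DirectSum.IsInternal fun j : Fin (n + 1) => PolCube n j := by
  have hcard (I : Finset (Fin n)) : I.card < n + 1 := by
    simpa using Nat.lt_succ_of_le (card_le_univ I)
  have hfiber (j : Fin (n + 1)) :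
      PolCube n j = Submodule.span ℝ (monomialBasis '' ((fun I => ⟨I.card, hcard I⟩) ⁻¹' {j})) := by
    rw [polCube_eq_span_image]
    congr! 2
    ext I
    simp [Fin.ext_iff]
  simpa only [hfiber] using monomialBasis.isInternal_span_image_fiber _

end Cube

open Cube in
/-- Each `Pol_k(C_n)` (for `0 ≤ k ≤ n`) is a nonzero irreducible `G_cube`-invariant
subspace of the space of functions on `{-1,1}ⁿ`, and the function space is the
internal direct sum `Pol₀ ⊕ ⋯ ⊕ Pol_n`. -/
theorem polCube_irreducible_decomposition (n : ℕ) :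
    (∀ k ≤ n,
      PolCube n k ≠ ⊥ ∧
      IsCubeInvariant n (PolCube n k) ∧
      ∀ V : Submodule ℝ (Cube n → ℝ), V ≤ PolCube n k → IsCubeInvariant n V →
        V = ⊥ ∨ V = PolCube n k) ∧
    DirectSum.IsInternal (fun j : Fin (n + 1) => PolCube n (j : ℕ)) :=
  ⟨fun k hk => ⟨polCube_ne_bot hk, isCubeInvariant_polCube k,
    fun _ hle hV => eq_bot_or_eq_polCube hV hle⟩, isInternal_polCube⟩
end

section
/- Let G_cube be the group of signed permutation matrices acting on functions on C_n = {-1,1}ⁿ. If V is a G_cube-invariant subspace of F(C_n, ℝ) with dim V < C(n,k) for some k ≤ n/2, then every f ∈ V can be written as f(x) = g(x) + (x₁x₂⋯x_n)·h(x) on C_n, where g and h are polynomials of degree at most k−1. -/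
theorem Nat.choose_le_choose_of_le_of_le_sub {n k j : ℕ} (hk : 2 * k ≤ n) (hkj : k ≤ j)
    (hjn : j ≤ n - k) : n.choose k ≤ n.choose j := by
  have mono : ∀ j, k ≤ j → 2 * j ≤ n → n.choose k ≤ n.choose j := by
    intro j hkj
    induction j, hkj using Nat.le_induction with
    | base => exact fun _ => le_rfl
    | succ j _ ih =>
      exact fun hj => (ih (by omega)).trans (Nat.choose_le_succ_of_lt_half_left (by omega))
  rcases le_or_gt (2 * j) n with hj | hj
  · exact mono j hkj hj
  · rw [← Nat.choose_symm (show j ≤ n by omega)]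
    exact mono _ (by omega) (by omega)

theorem MvPolynomial.totalDegree_sum_C_mul_prod_X_le {R σ ι : Type*} [CommSemiring R]
    (s : Finset ι) (c : ι → R) (T : ι → Finset σ) {d : ℕ} (h : ∀ a ∈ s, (T a).card ≤ d) :
    (∑ a ∈ s, C (c a) * ∏ i ∈ T a, X i).totalDegree ≤ d := by
  refine (totalDegree_finsetSum _ _).trans (Finset.sup_le fun a ha => ?_)
  calc (C (c a) * ∏ i ∈ T a, X i).totalDegree
      ≤ (C (c a) : MvPolynomial σ R).totalDegree + (∏ i ∈ T a, X i).totalDegree :=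
        totalDegree_mul _ _
    _ ≤ ∑ i ∈ T a, (X i : MvPolynomial σ R).totalDegree := by
        rw [totalDegree_C, zero_add]; exact totalDegree_finsetProd _ _
    _ ≤ ∑ i ∈ T a, 1 :=
        Finset.sum_le_sum fun i _ => (totalDegree_monomial_le _ _).trans (by simp)
    _ ≤ d := by simpa using h a ha

namespace Cube

open Finset

variable {n : ℕ}

noncomputable instance inst_s15 : Fintype (Cube n) :=
  Fintype.subtype (Fintype.piFinset fun _ => ({1, -1} : Finset ℝ))
    (by simp [Fintype.mem_piFinset])

theorem sum_prod_eq_prod_add (g : Fin n → ℝ → ℝ) :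
    ∑ x : Cube n, ∏ i, g i (x.1 i) = ∏ i, (g i 1 + g i (-1)) :=
  calc ∑ x : Cube n, ∏ i, g i (x.1 i)
      = ∑ x ∈ Fintype.piFinset fun _ => ({1, -1} : Finset ℝ), ∏ i, g i (x i) :=
        (sum_subtype (p := fun x : Fin n → ℝ => ∀ i, x i = 1 ∨ x i = -1)
          (F := (inferInstance : Fintype (Cube n))) _
          (by simp [Fintype.mem_piFinset]) (fun x => ∏ i, g i (x i))).symm
    _ = ∏ i, ∑ t ∈ ({1, -1} : Finset ℝ), g i t := (prod_univ_sum _ _).symm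
    _ = ∏ i, (g i 1 + g i (-1)) := by simp only [sum_pair (show (1 : ℝ) ≠ -1 by norm_num)]

theorem coord_mul_self (x : Cube n) (i : Fin n) : x.1 i * x.1 i = 1 := by
  rcases x.2 i with h | h <;> simp [h]

noncomputable instance : DecidableEq (Cube n) :=
  inferInstanceAs (DecidableEq {x : Fin n → ℝ // ∀ i, x i = 1 ∨ x i = -1})

/-- Coordinatewise product: multiplying by `y` is the sign change by `y`, so an invariant
subspace contains all translates of its elements. -/
instance : Mul (Cube n) := ⟨fun y x => signedAct n (Equiv.refl _) y.1 y.2 x⟩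

theorem mul_apply (y x : Cube n) (i : Fin n) : (y * x).1 i = y.1 i * x.1 i := rfl

theorem mul_mul_self_right (y x : Cube n) : y * x * x = y :=
  Subtype.ext <| funext fun i => by
    rw [mul_apply, mul_apply, mul_assoc, coord_mul_self, mul_one]

def chi (S : Finset (Fin n)) (x : Cube n) : ℝ := ∏ i ∈ S, x.1 i

theorem chi_mul (S : Finset (Fin n)) (y x : Cube n) : chi S (y * x) = chi S y * chi S x :=
  prod_mul_distrib

theorem sum_chi_mul_chi (S T : Finset (Fin n)) :
    ∑ x : Cube n, chi S x * chi T x = if S = T then 2 ^ n else 0 := by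
  classical
  have hprod : ∀ x : Cube n, chi S x * chi T x =
      ∏ i, (if i ∈ S then x.1 i else 1) * (if i ∈ T then x.1 i else 1) := fun x => by
    simp only [chi, prod_mul_distrib, prod_ite_mem, univ_inter]
  rw [sum_congr rfl fun x _ => hprod x]
  refine (sum_prod_eq_prod_add fun i t =>
    (if i ∈ S then t else 1) * (if i ∈ T then t else 1)).trans ?_
  split_ifs with hST
  · subst hST
    calc _ = ∏ _i : Fin n, (2 : ℝ) := prod_congr rfl fun i _ => by split_ifs <;> norm_num
      _ = 2 ^ n := by simp
  · obtain ⟨i, hi⟩ : ∃ i, ¬(i ∈ S ↔ i ∈ T) := by simpa [Finset.ext_iff] using hST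
    exact prod_eq_zero (mem_univ i) (by by_cases i ∈ S <;> by_cases i ∈ T <;> simp_all)

theorem linearIndependent_chi : LinearIndependent ℝ (chi (n := n)) := by
  rw [Fintype.linearIndependent_iff]
  intro a ha S
  have h := congrArg (fun F => ∑ x, chi S x * F x) ha
  simp only [Finset.sum_apply, Pi.smul_apply, smul_eq_mul, mul_sum, Pi.zero_apply, mul_zero,
    sum_const_zero] at h
  rw [sum_comm] at h
  simp only [mul_left_comm _ (a _), ← mul_sum, sum_chi_mul_chi, mul_ite, mul_zero,
    sum_ite_eq, mem_univ, if_true] at h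
  simpa using h

theorem sum_sets_chi_mul_chi (y x : Cube n) :
    ∑ S, chi S y * chi S x = if y = x then 2 ^ n else 0 := by
  simp only [chi, ← prod_mul_distrib]
  rw [← powerset_univ, ← prod_one_add]
  split_ifs with h
  · subst h
    simp only [coord_mul_self, one_add_one_eq_two, prod_const, card_univ, Fintype.card_fin]
  · obtain ⟨i, hi⟩ : ∃ i, y.1 i ≠ x.1 i := by
      by_contra! hyx
      exact h (Subtype.ext (funext hyx))
    refine prod_eq_zero (mem_univ i) ?_
    rcases y.2 i with hy | hy <;> rcases x.2 i with hx | hx <;> simp_all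

noncomputable def coeff (S : Finset (Fin n)) (f : Cube n → ℝ) : ℝ :=
  (2 ^ n)⁻¹ * ∑ x, chi S x * f x

theorem eq_sum_coeff_mul_chi (f : Cube n → ℝ) (x : Cube n) :
    f x = ∑ S, coeff S f * chi S x := by
  calc f x = (2 ^ n)⁻¹ * ∑ y, f y * (if y = x then 2 ^ n else 0) := by simp [mul_comm]
    _ = (2 ^ n)⁻¹ * ∑ y, f y * ∑ S, chi S y * chi S x := by simp only [sum_sets_chi_mul_chi]
    _ = ∑ S, coeff S f * chi S x := by
        simp only [coeff, mul_sum, sum_mul]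
        rw [sum_comm]
        exact sum_congr rfl fun S _ => sum_congr rfl fun y _ => by ring

theorem eq_sum_coeff_mul_chi_of_coeff_eq_zero {f : Cube n → ℝ} {A : Finset (Finset (Fin n))}
    (h : ∀ S ∉ A, coeff S f = 0) (x : Cube n) : f x = ∑ S ∈ A, coeff S f * chi S x := by
  rw [eq_sum_coeff_mul_chi f x]
  exact (sum_subset (subset_univ A) fun S _ hS => by rw [h S hS, zero_mul]).symm

theorem coeff_mul_chi_eq_average (S : Finset (Fin n)) (f : Cube n → ℝ) (x : Cube n) :
    coeff S f * chi S x = (2 ^ n)⁻¹ * ∑ y, chi S y * f (y * x) := by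
  calc coeff S f * chi S x = (2 ^ n)⁻¹ * ∑ y, chi S (y * x) * f y := by
        simp only [coeff, chi_mul, mul_sum, sum_mul]
        exact sum_congr rfl fun y _ => by ring
    _ = (2 ^ n)⁻¹ * ∑ y, chi S y * f (y * x) := by
        congr 1
        exact Fintype.sum_bijective (· * x)
          (Function.Involutive.bijective (mul_mul_self_right · x)) _ _
          fun y => by rw [mul_mul_self_right]

variable {V : Submodule ℝ (Cube n → ℝ)}

theorem coeff_smul_chi_mem (hV : IsCubeInvariant n V) {f : Cube n → ℝ} (hf : f ∈ V)
    (S : Finset (Fin n)) : coeff S f • chi S ∈ V := by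
  have h : coeff S f • chi S = ∑ y, ((2 ^ n)⁻¹ * chi S y) • fun x => f (y * x) := by
    ext x
    simp only [Pi.smul_apply, smul_eq_mul, coeff_mul_chi_eq_average, Finset.sum_apply, mul_sum,
      mul_assoc]
  rw [h]
  exact sum_mem fun y _ => V.smul_mem _ (hV (Equiv.refl _) y.1 y.2 f hf)

theorem chi_comp_perm (S : Finset (Fin n)) (σ : Equiv.Perm (Fin n)) :
    (fun x => chi S (signedAct n σ (fun _ => 1) (fun _ => Or.inl rfl) x)) =
      chi (S.map σ.toEmbedding) := by
  funext x
  simp only [chi, signedAct, one_mul, prod_map, Equiv.coe_toEmbedding]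

theorem chi_mem_of_card_eq (hV : IsCubeInvariant n V) {S T : Finset (Fin n)} (hS : chi S ∈ V)
    (h : S.card = T.card) : chi T ∈ V := by
  obtain ⟨σ, rfl⟩ := Equiv.Perm.exists_map_finset_eq S T h
  rw [← chi_comp_perm]
  exact hV σ _ _ _ hS

theorem choose_le_finrank {j : ℕ} (h : ∀ T : Finset (Fin n), T.card = j → chi T ∈ V) :
    n.choose j ≤ Module.finrank ℝ V := by
  have hli : LinearIndependent ℝ fun T : {T : Finset (Fin n) // T.card = j} =>
      (⟨chi T.1, h T.1 T.2⟩ : V) :=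
    .of_comp V.subtype (linearIndependent_chi.comp Subtype.val Subtype.val_injective)
  simpa [Fintype.card_finset_len] using hli.fintype_card_le_finrank

theorem coeff_eq_zero_of_finrank_lt_choose (hV : IsCubeInvariant n V) {f : Cube n → ℝ}
    (hf : f ∈ V) {S : Finset (Fin n)} (hS : Module.finrank ℝ V < n.choose S.card) :
    coeff S f = 0 := by
  by_contra hc
  have hχ : chi S ∈ V := by
    simpa [hc] using V.smul_mem (coeff S f)⁻¹ (coeff_smul_chi_mem hV hf S)
  exact hS.not_ge (choose_le_finrank fun T hT => chi_mem_of_card_eq hV hχ hT.symm)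

theorem chi_eq_prod_mul_chi_compl (S : Finset (Fin n)) (x : Cube n) :
    chi S x = (∏ i, x.1 i) * chi Sᶜ x := by
  rw [chi, chi, ← prod_mul_prod_compl S, mul_assoc, ← prod_mul_distrib,
    prod_congr rfl fun i _ => coord_mul_self x i, prod_const_one, mul_one]

end Cube

open Cube Finset MvPolynomial in
/-- If `V` is a `G_cube`-invariant subspace of functions on `{-1,1}ⁿ` with
`dim V < C(n,k)` for some `k ≤ n/2`, then every `f ∈ V` has the form
`f(x) = g(x) + (x₁⋯x_n)·h(x)` with `g, h` polynomials of degree at most `k - 1`. -/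
theorem cube_low_dim_invariant_subspace (n k : ℕ) (hk : 2 * k ≤ n)
    (V : Submodule ℝ (Cube n → ℝ)) (hV : IsCubeInvariant n V)
    (hdim : Module.finrank ℝ V < n.choose k) :
    ∀ f ∈ V, ∃ g h : MvPolynomial (Fin n) ℝ,
      g.totalDegree ≤ k - 1 ∧ h.totalDegree ≤ k - 1 ∧
      ∀ x : Cube n,
        f x = MvPolynomial.eval x.1 g + (∏ i, x.1 i) * MvPolynomial.eval x.1 h := by
  intro f hf
  set low := univ.filter fun S : Finset (Fin n) => S.card < k
  set high := univ.filter fun S : Finset (Fin n) => n - k < S.card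
  have hvanish : ∀ S ∉ low ∪ high, coeff S f = 0 := fun S hS => by
    simp only [low, high, mem_union, mem_filter, mem_univ, true_and, not_or, not_lt] at hS
    exact coeff_eq_zero_of_finrank_lt_choose hV hf
      (hdim.trans_le (Nat.choose_le_choose_of_le_of_le_sub hk hS.1 hS.2))
  refine ⟨∑ S ∈ low, C (coeff S f) * ∏ i ∈ S, X i,
    ∑ S ∈ high, C (coeff S f) * ∏ i ∈ Sᶜ, X i,
    totalDegree_sum_C_mul_prod_X_le _ _ _ fun S hS => ?_,
    totalDegree_sum_C_mul_prod_X_le _ _ _ fun S hS => ?_, fun x => ?_⟩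
  · simp only [low, mem_filter] at hS
    omega
  · simp only [high, mem_filter] at hS
    have := S.card_le_univ
    rw [card_compl, Fintype.card_fin] at *
    omega
  · rw [eq_sum_coeff_mul_chi_of_coeff_eq_zero hvanish x,
      sum_union (disjoint_filter.2 fun S _ h₁ h₂ => by omega)]
    simp only [map_sum, map_mul, map_prod, eval_C, eval_X, mul_sum]
    congr 1
    exact sum_congr rfl fun S _ => by rw [chi_eq_prod_mul_chi_compl, chi]; ring
end

section
/- Let P = π(S^d₊ ∩ L) be a positive semidefinite lift of a polytope P ⊆ ℝⁿ, where L is an affine subspace of d×d symmetric matrices satisfying Slater's condition (L meets the interior of the psd cone), π is linear, and let X ⊆ P with a map A : X → S^d₊ ∩ L satisfying π(A(x)) = x for all x ∈ X. Then for every linear functional ℓ on ℝⁿ there exists a positive semidefinite matrix B(ℓ) such that ℓ_max − ℓ(x) = ⟨A(x), B(ℓ)⟩ for all x ∈ X, where ℓ_max = max_{x∈P} ℓ(x) and ⟨·,·⟩ is the trace inner product. -/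
/-!
Homogenize: with `M₀ ∈ L` positive definite, the pairs `(M, t)` with `M - t • M₀` in the
direction of `L` form a subspace `H` of `Mat × ℝ`, and `(M, t) ↦ t * ℓ_max - ℓ (π M)` is
nonnegative on `H ∩ C`, where `C` is the cone of pairs with `M` of nonnegative quadratic form and
`t ≥ 0`. Since `M₀` is interior to `C`, `H + C` is the whole space, so M. Riesz's extension
theorem extends this functional to some `g ≥ 0` on `C`. On `Mat × 0`, `g` is `⟨·, B⟩` with `B`
psd (test it on `x xᵀ`), and `β = g (0, 1) ≥ 0`; then `ℓ_max - ℓ (π M) = ⟨M, B⟩ + β` on `L`, and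
evaluating at a maximizer forces `β = 0`.
-/

open Filter Matrix

namespace Matrix

variable {ι : Type*} [Fintype ι]

/-- Matrices with nonnegative quadratic form, symmetric or not: unlike the psd cone, this cone has
interior in the space of all matrices, as M. Riesz's extension theorem needs. -/
def quadNonnegCone : PointedCone ℝ (Matrix ι ι ℝ) where
  carrier := {M | ∀ x, 0 ≤ x ⬝ᵥ M *ᵥ x}
  zero_mem' := by simp
  add_mem' hM hN x := by
    simpa only [add_mulVec, dotProduct_add] using add_nonneg (hM x) (hN x)
  smul_mem' c M hM x := by
    rw [smul_mulVec, dotProduct_smul]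
    exact mul_nonneg c.2 (hM x)

theorem PosSemidef.mem_quadNonnegCone {M : Matrix ι ι ℝ} (hM : M.PosSemidef) :
    M ∈ quadNonnegCone := fun x => by
  simpa using hM.dotProduct_mulVec_nonneg x

theorem posSemidef_of_mem_quadNonnegCone {M : Matrix ι ι ℝ} (hsym : Mᵀ = M)
    (hM : M ∈ quadNonnegCone) : M.PosSemidef :=
  posSemidef_iff_dotProduct_mulVec.mpr ⟨hsym, fun x => by simpa using hM x⟩

theorem vecMulVec_self_mem_quadNonnegCone (x : ι → ℝ) : vecMulVec x x ∈ quadNonnegCone := by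
  simpa using (posSemidef_vecMulVec_self_star x).mem_quadNonnegCone

theorem dotProduct_mulVec_smul_self (M : Matrix ι ι ℝ) (a : ℝ) (x : ι → ℝ) :
    (a • x) ⬝ᵥ M *ᵥ (a • x) = a ^ 2 * (x ⬝ᵥ M *ᵥ x) := by
  rw [mulVec_smul, dotProduct_smul, smul_dotProduct, smul_eq_mul, smul_eq_mul]
  ring

theorem mem_quadNonnegCone_of_forall_mem_sphere {M : Matrix ι ι ℝ}
    (h : ∀ u ∈ Metric.sphere (0 : ι → ℝ) 1, 0 ≤ u ⬝ᵥ M *ᵥ u) : M ∈ quadNonnegCone := by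
  intro x
  rcases eq_or_ne x 0 with rfl | hx
  · simp
  have hu : ‖x‖⁻¹ • x ∈ Metric.sphere (0 : ι → ℝ) 1 := by
    simp [norm_smul, norm_ne_zero_iff.mpr hx]
  have hx_eq : x = ‖x‖ • ‖x‖⁻¹ • x := by simp [norm_ne_zero_iff.mpr hx]
  rw [hx_eq, dotProduct_mulVec_smul_self]
  exact mul_nonneg (sq_nonneg _) (h _ hu)

theorem continuous_dotProduct_mulVec_self (M : Matrix ι ι ℝ) :
    Continuous fun x : ι → ℝ => x ⬝ᵥ M *ᵥ x :=
  continuous_id.dotProduct (continuous_const.matrix_mulVec continuous_id)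

theorem PosDef.eventually_smul_add_mem_quadNonnegCone {M₀ : Matrix ι ι ℝ} (hM₀ : M₀.PosDef)
    (N : Matrix ι ι ℝ) : ∀ᶠ t : ℝ in atTop, t • M₀ + N ∈ quadNonnegCone := by
  set S := Metric.sphere (0 : ι → ℝ) 1
  have hpos : ∀ u ∈ S, 0 < u ⬝ᵥ M₀ *ᵥ u := fun u hu => by
    simpa using hM₀.dotProduct_mulVec_pos (ne_zero_of_mem_unit_sphere ⟨u, hu⟩)
  -- the Rayleigh quotient of `N` relative to `M₀` is bounded below on the compact unit sphere
  obtain ⟨m, hm⟩ := (isCompact_sphere (0 : ι → ℝ) 1).bddBelow_image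
    (f := fun u => u ⬝ᵥ N *ᵥ u / u ⬝ᵥ M₀ *ᵥ u)
    ((continuous_dotProduct_mulVec_self N).continuousOn.div
      (continuous_dotProduct_mulVec_self M₀).continuousOn fun u hu => (hpos u hu).ne')
  filter_upwards [eventually_ge_atTop (-m)] with t ht
  refine mem_quadNonnegCone_of_forall_mem_sphere fun u hu => ?_
  have hmu : m ≤ u ⬝ᵥ N *ᵥ u / u ⬝ᵥ M₀ *ᵥ u := hm ⟨u, hu, rfl⟩
  rw [le_div_iff₀ (hpos u hu)] at hmu
  rw [add_mulVec, smul_mulVec, dotProduct_add, dotProduct_smul, smul_eq_mul]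
  nlinarith [hpos u hu]

theorem exists_eq_trace_transpose_mul {m n R : Type*} [Fintype m] [Fintype n] [DecidableEq m]
    [DecidableEq n] [CommSemiring R] (f : Matrix m n R →ₗ[R] R) :
    ∃ B : Matrix m n R, ∀ M, f M = trace (Mᵀ * B) := by
  refine ⟨of fun i j => f (single i j 1), fun M => ?_⟩
  conv_lhs => rw [matrix_eq_sum_single M]
  simp only [map_sum, trace, diag, mul_apply, transpose_apply, of_apply]
  rw [Finset.sum_comm]
  refine Finset.sum_congr rfl fun i _ => Finset.sum_congr rfl fun j _ => ?_
  simpa [smul_single] using map_smul f (M j i) (single j i 1)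

theorem trace_transpose_vecMulVec_mul {R : Type*} [CommSemiring R] (x : ι → R)
    (B : Matrix ι ι R) :
    trace ((vecMulVec x x)ᵀ * B) = x ⬝ᵥ B *ᵥ x := by
  rw [transpose_vecMulVec]
  simp only [trace, diag, mul_apply, vecMulVec_apply, dotProduct, mulVec, Finset.mul_sum]
  rw [Finset.sum_comm]
  exact Finset.sum_congr rfl fun i _ => Finset.sum_congr rfl fun j _ => by ring

theorem trace_transpose_mul_transpose_of_symm {R : Type*} [CommSemiring R] {M : Matrix ι ι R}
    (hM : Mᵀ = M) (B : Matrix ι ι R) :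
    trace (Mᵀ * Bᵀ) = trace (Mᵀ * B) := by
  rw [trace_transpose_mul, hM]

theorem exists_posSemidef_eq_trace_of_nonneg [DecidableEq ι] (f : Matrix ι ι ℝ →ₗ[ℝ] ℝ)
    (hf : ∀ M ∈ quadNonnegCone, 0 ≤ f M) :
    ∃ B : Matrix ι ι ℝ, B.PosSemidef ∧ ∀ M, Mᵀ = M → f M = trace (Mᵀ * B) := by
  obtain ⟨B, hB⟩ := exists_eq_trace_transpose_mul f
  -- only the symmetric part of `B` is seen by symmetric matrices
  refine ⟨(1 / 2 : ℝ) • (B + Bᵀ), posSemidef_of_mem_quadNonnegCone ?_ fun x => ?_, fun M hM => ?_⟩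
  · rw [transpose_smul, transpose_add, transpose_transpose, add_comm]
  · rw [smul_mulVec, add_mulVec, dotProduct_smul, dotProduct_add, dotProduct_transpose_mulVec,
      ← trace_transpose_vecMulVec_mul, ← hB, smul_eq_mul]
    linarith [hf _ (vecMulVec_self_mem_quadNonnegCone x)]
  · rw [Matrix.mul_smul, Matrix.mul_add, trace_smul, trace_add,
      trace_transpose_mul_transpose_of_symm hM, ← hB, smul_eq_mul]
    ring

open scoped MatrixOrder in
theorem PosSemidef.trace_mul_nonneg {A B : Matrix ι ι ℝ} (hA : A.PosSemidef)
    (hB : B.PosSemidef) :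
    0 ≤ trace (A * B) := by
  classical
  obtain ⟨R, rfl⟩ := CStarAlgebra.nonneg_iff_eq_star_mul_self.mp hB.nonneg
  rw [← Matrix.mul_assoc, trace_mul_comm, ← Matrix.mul_assoc]
  exact (hA.mul_mul_conjTranspose_same R).trace_nonneg

end Matrix

section SemidefiniteDuality

variable {ι : Type*} {L : AffineSubspace ℝ (Matrix ι ι ℝ)}

theorem AffineSubspace.transpose_eq_of_mem_direction (hLsym : ∀ M ∈ L, Mᵀ = M)
    {M₀ V : Matrix ι ι ℝ} (hM₀ : M₀ ∈ L) (hV : V ∈ L.direction) : Vᵀ = V := by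
  have := hLsym _ (AffineSubspace.vadd_mem_of_mem_direction hV hM₀)
  rwa [vadd_eq_add, transpose_add, hLsym _ hM₀, add_left_inj] at this

variable [Fintype ι]

theorem AffineSubspace.le_mul_of_sub_smul_mem_direction (hLsym : ∀ M ∈ L, Mᵀ = M)
    {f : Matrix ι ι ℝ →ₗ[ℝ] ℝ} {c : ℝ} (hf : ∀ M ∈ L, M.PosSemidef → f M ≤ c)
    {M₀ : Matrix ι ι ℝ} (hM₀ : M₀ ∈ L) (hM₀psd : M₀.PosSemidef)
    {M : Matrix ι ι ℝ} {t : ℝ} (hMt : M - t • M₀ ∈ L.direction) (hM : M ∈ quadNonnegCone)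
    (ht : 0 ≤ t) : f M ≤ t * c := by
  have hsym : Mᵀ = M := by
    have := L.transpose_eq_of_mem_direction hLsym hM₀ hMt
    rwa [transpose_sub, transpose_smul, hLsym _ hM₀, sub_left_inj] at this
  have hpsd : M.PosSemidef := posSemidef_of_mem_quadNonnegCone hsym hM
  -- `(M + s • M₀) / (t + s)` lies in `L` for `s > 0`, even when `t = 0`
  have hperturb : ∀ s > 0, f M + s * f M₀ ≤ (t + s) * c := by
    intro s hs
    have hts : 0 < t + s := by linarith
    have hmem : (t + s)⁻¹ • (M + s • M₀) ∈ L := by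
      rw [← AffineSubspace.vsub_right_mem_direction_iff_mem hM₀, vsub_eq_sub]
      have hsplit : M - t • M₀ = (M + s • M₀) - (t + s) • M₀ := by module
      convert L.direction.smul_mem (t + s)⁻¹ hMt using 1
      rw [hsplit, smul_sub, smul_smul, inv_mul_cancel₀ hts.ne', one_smul]
    have := hf _ hmem ((hpsd.add (hM₀psd.smul hs.le)).smul (inv_nonneg.mpr hts.le))
    rw [map_smul, map_add, map_smul, smul_eq_mul, smul_eq_mul, inv_mul_le_iff₀ hts] at this
    linarith
  have hK : 0 ≤ c - f M₀ := sub_nonneg.mpr (hf M₀ hM₀ hM₀psd)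
  refine le_of_forall_pos_le_add fun ε hε => ?_
  have hs : ε / (c - f M₀ + 1) * (c - f M₀) ≤ ε := by
    rw [div_mul_eq_mul_div, div_le_iff₀ (by linarith)]
    nlinarith
  linarith [hperturb (ε / (c - f M₀ + 1)) (by positivity)]

theorem AffineSubspace.exists_posSemidef_trace_add_eq [DecidableEq ι] (hLsym : ∀ M ∈ L, Mᵀ = M)
    (hslater : ∃ M ∈ L, M.PosDef) (f : Matrix ι ι ℝ →ₗ[ℝ] ℝ) (c : ℝ)
    (hf : ∀ M ∈ L, M.PosSemidef → f M ≤ c) :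
    ∃ B : Matrix ι ι ℝ, B.PosSemidef ∧ ∃ β ≥ 0, ∀ M ∈ L, c - f M = trace (Mᵀ * B) + β := by
  obtain ⟨M₀, hM₀, hM₀pd⟩ := hslater
  let H : Submodule ℝ (Matrix ι ι ℝ × ℝ) :=
    L.direction.comap (LinearMap.fst ℝ _ ℝ - (LinearMap.snd ℝ _ ℝ).smulRight M₀)
  let F : Matrix ι ι ℝ × ℝ →ₗ[ℝ] ℝ := c • LinearMap.snd ℝ _ ℝ - f ∘ₗ LinearMap.fst ℝ _ ℝ
  let C : PointedCone ℝ (Matrix ι ι ℝ × ℝ) := quadNonnegCone.prod (PointedCone.positive ℝ ℝ)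
  have hH (p : Matrix ι ι ℝ × ℝ) : p ∈ H ↔ p.1 - p.2 • M₀ ∈ L.direction := Iff.rfl
  have hC (p : Matrix ι ι ℝ × ℝ) : p ∈ C ↔ p.1 ∈ quadNonnegCone ∧ 0 ≤ p.2 := by
    simp [C, Submodule.mem_prod, PointedCone.mem_positive]
  obtain ⟨g, hgF, hgC⟩ := riesz_extension C (F.toPMap H)
    (fun ⟨⟨M, t⟩, hp⟩ hpC => by
      have := L.le_mul_of_sub_smul_mem_direction hLsym hf hM₀ hM₀pd.posSemidef hp
        ((hC _).1 hpC).1 ((hC _).1 hpC).2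
      simp only [LinearMap.fst_apply, LinearMap.snd_apply] at this
      simpa [F, mul_comm] using this)
    (fun ⟨N, r⟩ => by
      obtain ⟨t, htN, htr⟩ := ((hM₀pd.eventually_smul_add_mem_quadNonnegCone N).and
        (eventually_ge_atTop (-r))).exists
      exact ⟨⟨(t • M₀, t), by simp [hH]⟩, (hC _).2 ⟨htN, by simp; linarith⟩⟩)
  obtain ⟨B, hBpsd, hB⟩ := exists_posSemidef_eq_trace_of_nonneg (g ∘ₗ LinearMap.inl ℝ _ ℝ)
    fun M hM => hgC _ ((hC _).2 ⟨hM, le_rfl⟩)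
  refine ⟨B, hBpsd, g (0, 1), hgC _ ((hC _).2 ⟨zero_mem _, zero_le_one⟩), fun M hM => ?_⟩
  have hMH : (M, (1 : ℝ)) ∈ H := by
    simpa [hH] using (AffineSubspace.vsub_right_mem_direction_iff_mem hM₀ M).2 hM
  calc c - f M = g (M, 1) := by simpa [F] using (hgF ⟨_, hMH⟩).symm
    _ = g (M, 0) + g (0, 1) := by rw [← map_add, Prod.mk_add_mk, add_zero, zero_add]
    _ = trace (Mᵀ * B) + g (0, 1) := by rw [← hB M (hLsym M hM)]; rfl

end SemidefiniteDuality

theorem psd_lift_factorization_general (n d : ℕ)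
    (P : Set (Fin n → ℝ))
    (L : AffineSubspace ℝ (Matrix (Fin d) (Fin d) ℝ))
    (hLsym : ∀ M ∈ L, Mᵀ = M)
    (π : Matrix (Fin d) (Fin d) ℝ →ₗ[ℝ] (Fin n → ℝ))
    (hlift : P = π '' {M | M.PosSemidef ∧ M ∈ L})
    (hslater : ∃ M ∈ L, M.PosDef)
    (X : Set (Fin n → ℝ))
    (A : X → Matrix (Fin d) (Fin d) ℝ)
    (hA : ∀ x : X, (A x).PosSemidef ∧ A x ∈ L ∧ π (A x) = (x : Fin n → ℝ))
    (ℓ : (Fin n → ℝ) →ₗ[ℝ] ℝ) (lmax : ℝ)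
    (hlmax : IsGreatest (ℓ '' P) lmax) :
    ∃ B : Matrix (Fin d) (Fin d) ℝ, B.PosSemidef ∧
      ∀ x : X, lmax - ℓ (x : Fin n → ℝ) = Matrix.trace ((A x)ᵀ * B) := by
  subst hlift
  obtain ⟨B, hB, β, hβ, hrepr⟩ := L.exists_posSemidef_trace_add_eq hLsym hslater (ℓ ∘ₗ π) lmax
    fun M hM hMpsd => hlmax.2 ⟨π M, ⟨M, ⟨hMpsd, hM⟩, rfl⟩, rfl⟩
  -- the maximum is attained, which forces the constant `β` to vanish
  obtain ⟨-, ⟨Mmax, ⟨hMmax_psd, hMmax⟩, rfl⟩, hmax⟩ := hlmax.1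
  have hβ0 : β = 0 := by
    have := hrepr Mmax hMmax
    rw [LinearMap.comp_apply, hmax, sub_self, hLsym Mmax hMmax] at this
    linarith [hMmax_psd.trace_mul_nonneg hB]
  refine ⟨B, hB, fun x => ?_⟩
  obtain ⟨-, hxL, hxπ⟩ := hA x
  rw [← hxπ, ← LinearMap.comp_apply, hrepr _ hxL, hβ0, add_zero]

/-- Factorization theorem for psd lifts: if a polytope `P = π(S⁺_d ∩ L)` (with `L` an
affine subspace of symmetric matrices meeting the interior of the psd cone) and
`A : X → S⁺_d ∩ L` is a section of `π` over `X ⊆ P`, then every linear functional `ℓ`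
admits a psd matrix `B(ℓ)` with `ℓ_max - ℓ(x) = ⟨A(x), B(ℓ)⟩` for all `x ∈ X`. -/
theorem psd_lift_factorization (n d : ℕ)
    (P : Set (Fin n → ℝ))
    (hpoly : ∃ F : Set (Fin n → ℝ), F.Finite ∧ P = convexHull ℝ F)
    (L : AffineSubspace ℝ (Matrix (Fin d) (Fin d) ℝ))
    (hLsym : ∀ M ∈ L, Mᵀ = M)
    (π : Matrix (Fin d) (Fin d) ℝ →ₗ[ℝ] (Fin n → ℝ))
    (hlift : P = π '' {M | M.PosSemidef ∧ M ∈ L})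
    (hslater : ∃ M ∈ L, M.PosDef)
    (X : Set (Fin n → ℝ)) (hX : X ⊆ P)
    (A : X → Matrix (Fin d) (Fin d) ℝ)
    (hA : ∀ x : X, (A x).PosSemidef ∧ A x ∈ L ∧ π (A x) = (x : Fin n → ℝ))
    (ℓ : (Fin n → ℝ) →ₗ[ℝ] ℝ) (lmax : ℝ)
    (hlmax : IsGreatest (ℓ '' P) lmax) :
    ∃ B : Matrix (Fin d) (Fin d) ℝ, B.PosSemidef ∧
      ∀ x : X, lmax - ℓ (x : Fin n → ℝ) = Matrix.trace ((A x)ᵀ * B) :=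
  psd_lift_factorization_general n d P L hLsym π hlift hslater X A hA ℓ lmax hlmax
end
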